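/- arXiv:math/0511479 — 6 statements merged into one kernel-verified Lean document; each statement's English description precedes it below -/
import Mathlib

section
/- For every function f ∈ L¹(ℝ²), the set {s ∈ [0,π/2) : D̄_s f(x) = ∞ for almost every x ∈ ℝ²} is a G_δ set in [0,π/2), i.e. it equals (⋂_{k=1}^∞ G_k) ∩ [0,π/2) for some sequence of open sets G_k ⊆ ℝ. -/
open MeasureTheory Filter Set Real
open scoped ENNReal

noncomputable section

/-- Rotation of the plane about the origin by angle `s`. -/
def rot (s : ℝ) (p : ℝ × ℝ) : ℝ × ℝ :=
  (p.1 * Real.cos s - p.2 * Real.sin s, p.1 * Real.sin s + p.2 * Real.cos s)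

/-- The open rectangle with slope `s`, corner `c` and side lengths `a`, `b`. -/
def rect (s : ℝ) (c : ℝ × ℝ) (a b : ℝ) : Set (ℝ × ℝ) :=
  (fun p => c + rot s p) '' (Set.Ioo 0 a ×ˢ Set.Ioo 0 b)

/-- `R` is an open rectangle with slope `s` whose side lengths satisfy `P`. -/
def IsRectWith (s : ℝ) (P : ℝ → Prop) (R : Set (ℝ × ℝ)) : Prop :=
  ∃ c a b, 0 < a ∧ 0 < b ∧ P a ∧ P b ∧ R = rect s c a b

/-- `R` is an open rectangle with slope `s`. -/
def IsRect (s : ℝ) (R : Set (ℝ × ℝ)) : Prop :=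
  IsRectWith s (fun _ => True) R

/-- Average of `f` over the set `R`. -/
def avg (f : ℝ × ℝ → ℝ) (R : Set (ℝ × ℝ)) : ℝ :=
  (∫ p in R, f p) / (volume R).toReal

/-- The filter of slope-`s` rectangles containing `x` with diameters shrinking to `0`. -/
def rectFilter (s : ℝ) (x : ℝ × ℝ) : Filter (Set (ℝ × ℝ)) :=
  ⨅ d ∈ Set.Ioi (0 : ℝ), Filter.principal {R | IsRect s R ∧ x ∈ R ∧ Metric.diam R < d}

/-- The upper derivative `D̄_s f (x)`. -/
def upperDeriv (s : ℝ) (f : ℝ × ℝ → ℝ) (x : ℝ × ℝ) : EReal :=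
  Filter.limsup (fun R => (avg f R : EReal)) (rectFilter s x)

/-- The basis `R_s` differentiates the integral of `f`. -/
def Differentiates (s : ℝ) (f : ℝ × ℝ → ℝ) : Prop :=
  ∀ᵐ x : ℝ × ℝ, Filter.Tendsto (fun R => avg f R) (rectFilter s x) (nhds (f x))

/-- `S ⊆ [0, π/2)` is a `G_δ` set in `[0, π/2)`. -/
def IsGdeltaIn (S : Set ℝ) : Prop :=
  ∃ G : ℕ → Set ℝ, (∀ k, IsOpen (G k)) ∧ S = (⋂ k, G k) ∩ Set.Ico 0 (π / 2)

/-- `S` is a `G_δσ` set in `[0, π/2)`. -/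
def IsGdeltaSigmaIn (S : Set ℝ) : Prop :=
  ∃ F : ℕ → Set ℝ, (∀ n, IsGdeltaIn (F n)) ∧ S = ⋃ n, F n

/-- `S` is an `R`-set. -/
def IsRSet (S : Set ℝ) : Prop :=
  S ⊆ Set.Ico 0 (π / 2) ∧
    ∃ f : ℝ × ℝ → ℝ, Integrable f ∧
      (∀ s ∈ Set.Ico 0 (π / 2) \ S, Differentiates s f) ∧
      (∀ s ∈ S, ∀ᵐ x : ℝ × ℝ, upperDeriv s f x = ⊤)

/-- `S` is a `WR`-set. -/
def IsWRSet (S : Set ℝ) : Prop :=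
  S ⊆ Set.Ico 0 (π / 2) ∧
    ∃ f : ℝ × ℝ → ℝ, Integrable f ∧
      (∀ s ∈ Set.Ico 0 (π / 2) \ S, Differentiates s f) ∧
      (∀ s ∈ S, 0 < volume {x : ℝ × ℝ | upperDeriv s f x = ⊤})

/-- The grid square `Q_k^n` of side `1/n`. -/
def gridSq (n : ℕ) (k : ℤ × ℤ) : Set (ℝ × ℝ) :=
  (fun x : ℝ × ℝ => ((n : ℝ))⁻¹ • (((k.1 : ℝ), (k.2 : ℝ)) + x)) ''
    (Set.Ico (-(1 : ℝ)/2) (1/2) ×ˢ Set.Ico (-(1 : ℝ)/2) (1/2))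

/-- `mes_* A = inf_k |A ∩ Q_k|`. -/
def mesLow (A : Set (ℝ × ℝ)) : ℝ :=
  ⨅ k : ℤ × ℤ, (volume (A ∩ gridSq 1 k)).toReal

/-- `mes^* A = sup_k |A ∩ Q_k|`. -/
def mesUp (A : Set (ℝ × ℝ)) : ℝ :=
  ⨆ k : ℤ × ℤ, (volume (A ∩ gridSq 1 k)).toReal

/-- `dil_n A = {x : n x ∈ A}`. -/
def dil (n : ℕ) (A : Set (ℝ × ℝ)) : Set (ℝ × ℝ) :=
  {x : ℝ × ℝ | (n : ℝ) • x ∈ A}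

/-- `A` is a `δ`-set with respect to the slope `s`: a union of mutually disjoint
rectangles of slope `s` with both side lengths `≥ δ`. -/
def IsDeltaSet (s δ : ℝ) (A : Set (ℝ × ℝ)) : Prop :=
  ∃ (ι : Type) (R : ι → Set (ℝ × ℝ)),
    (∀ i, IsRectWith s (fun a => δ ≤ a) (R i)) ∧
      Pairwise (Function.onFun Disjoint R) ∧ A = ⋃ i, R i

/-- The maximal function over slope-`s` rectangles whose side lengths satisfy `P`. -/
def maxFn (s : ℝ) (P : ℝ → Prop) (f : ℝ × ℝ → ℝ) (x : ℝ × ℝ) : ℝ≥0∞ :=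
  ⨆ (R : Set (ℝ × ℝ)) (_ : IsRectWith s P R ∧ x ∈ R),
    ENNReal.ofReal (|∫ p in R, f p| / (volume R).toReal)

/-- The points `θ_k`, `k = ±1, ±2, …`. -/
def theta (ε γ : ℝ) (k : ℤ) : ℝ × ℝ :=
  (ε / 2 ^ k.natAbs, (k.sign : ℝ) * Real.tan γ * ε / 2 ^ k.natAbs)

/-- The strip `Γ_s(ε)`. -/
def strip (s ε : ℝ) : Set (ℝ × ℝ) :=
  rot s '' {x : ℝ × ℝ | |x.2| < ε}

/-- The Euclidean ball `B(ε)` in the plane. -/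
def euclBall (ε : ℝ) : Set (ℝ × ℝ) :=
  {x : ℝ × ℝ | Real.sqrt (x.1 ^ 2 + x.2 ^ 2) ≤ ε}


/-!
Let `U_k(s)` be the union of the slope-`s` rectangles with sides `< 1/(k+1)` on which `f` has
average `> k`; then `D̄_s f(x) = ∞` iff `x ∈ U_k(s)` for every `k`. Each `U_k(s)` is open, and the
average of `f` over a fixed rectangle depends continuously on its slope (dominated convergence:
the boundary of the rectangle is null), so for every `x` the slopes `s` with `x ∈ U_k(s)` form an
open set. By Fatou's lemma `s ↦ |U_k(s) ∩ B|` is then lower semicontinuous, hence the slopes for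
which `U_k(s)` has full measure form a `G_δ` set, and so does their intersection over `k`.
-/

open Topology

lemma rot_rot (s t : ℝ) (p : ℝ × ℝ) : rot s (rot t p) = rot (s + t) p := by
  simp only [rot, Real.cos_add, Real.sin_add, Prod.mk.injEq]
  constructor <;> ring

lemma rot_neg_rot (s : ℝ) (p : ℝ × ℝ) : rot (-s) (rot s p) = p := by
  rw [rot_rot, neg_add_cancel]
  simp [rot]

def rotL (s : ℝ) : (ℝ × ℝ) →ₗ[ℝ] ℝ × ℝ where
  toFun := rot s
  map_add' p q := by
    simp only [rot, Prod.fst_add, Prod.snd_add, Prod.mk_add_mk, Prod.mk.injEq]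
    constructor <;> ring
  map_smul' r p := by
    simp only [rot, Prod.smul_fst, Prod.smul_snd, Prod.smul_mk, smul_eq_mul, RingHom.id_apply,
      Prod.mk.injEq]
    constructor <;> ring

lemma det_rotL (s : ℝ) : LinearMap.det (rotL s) = 1 := by
  rw [← LinearMap.det_toMatrix (Module.Basis.finTwoProd ℝ)]
  have : LinearMap.toMatrix (Module.Basis.finTwoProd ℝ) (Module.Basis.finTwoProd ℝ) (rotL s)
      = !![Real.cos s, -Real.sin s; Real.sin s, Real.cos s] := by
    ext i j
    fin_cases i <;> fin_cases j <;> simp [LinearMap.toMatrix_apply, rotL, rot]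
  rw [this, Matrix.det_fin_two_of]
  linear_combination sin_sq_add_cos_sq s

lemma rot_sub (s : ℝ) (p q : ℝ × ℝ) : rot s p - rot s q = rot s (p - q) :=
  ((rotL s).map_sub p q).symm

lemma volume_preimage_rot_sub (s : ℝ) (c : ℝ × ℝ) (A : Set (ℝ × ℝ)) :
    volume ((fun x => rot s (x - c)) ⁻¹' A) = volume A := by
  change volume ((· + -c) ⁻¹' (rotL s ⁻¹' A)) = volume A
  rw [measure_preimage_add_right, Measure.addHaar_preimage_linearMap _ (by simp [det_rotL])]
  simp [det_rotL]

lemma norm_rot_le (s : ℝ) (p : ℝ × ℝ) : ‖rot s p‖ ≤ 2 * ‖p‖ := by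
  have h₁ : |p.1| ≤ ‖p‖ := norm_fst_le p
  have h₂ : |p.2| ≤ ‖p‖ := norm_snd_le p
  have hc := abs_cos_le_one s
  have hs := abs_sin_le_one s
  have key : ∀ α β : ℝ, |α| ≤ 1 → |β| ≤ 1 → |p.1 * α + p.2 * β| ≤ 2 * ‖p‖ := fun α β hα hβ =>
    calc |p.1 * α + p.2 * β| ≤ |p.1| * |α| + |p.2| * |β| := by
          rw [← abs_mul, ← abs_mul]; exact abs_add_le _ _
      _ ≤ ‖p‖ * 1 + ‖p‖ * 1 := by gcongr
      _ = 2 * ‖p‖ := by ring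
  rw [Prod.norm_def]
  simp only [rot, Real.norm_eq_abs]
  refine max_le ?_ (key _ _ hs hc)
  simpa [sub_eq_add_neg] using key _ (-Real.sin s) hc (by rwa [abs_neg])

lemma lipschitzWith_rot_sub (s : ℝ) (c : ℝ × ℝ) :
    LipschitzWith 2 fun x => rot s (x - c) :=
  LipschitzWith.of_dist_le_mul fun x y => by
    rw [dist_eq_norm, dist_eq_norm, rot_sub, sub_sub_sub_cancel_right]
    exact norm_rot_le s (x - y)

lemma lipschitzWith_add_rot (s : ℝ) (c : ℝ × ℝ) :
    LipschitzWith 2 fun p => c + rot s p :=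
  LipschitzWith.of_dist_le_mul fun p q => by
    rw [dist_add_left, dist_eq_norm, dist_eq_norm, rot_sub]
    exact norm_rot_le s (p - q)

lemma rect_eq_preimage (s : ℝ) (c : ℝ × ℝ) (a b : ℝ) :
    rect s c a b = (fun x => rot (-s) (x - c)) ⁻¹' (Ioo 0 a ×ˢ Ioo 0 b) := by
  ext x
  constructor
  · rintro ⟨p, hp, rfl⟩
    simpa [rot_neg_rot] using hp
  · intro hx
    refine ⟨rot (-s) (x - c), hx, ?_⟩
    simpa using congrArg (c + ·) (rot_neg_rot (-s) (x - c))

lemma Ioo_prod_Ioo_eq_image_rect (s : ℝ) (c : ℝ × ℝ) (a b : ℝ) :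
    Ioo 0 a ×ˢ Ioo 0 b = (fun x => rot (-s) (x - c)) '' rect s c a b := by
  simp [rect, image_image, rot_neg_rot]

lemma continuous_rot_neg_sub (x c : ℝ × ℝ) : Continuous fun s : ℝ => rot (-s) (x - c) := by
  unfold rot; fun_prop

lemma isOpen_rect (s : ℝ) (c : ℝ × ℝ) (a b : ℝ) : IsOpen (rect s c a b) := by
  rw [rect_eq_preimage]
  exact (isOpen_Ioo.prod isOpen_Ioo).preimage (lipschitzWith_rot_sub (-s) c).continuous

lemma isOpen_setOf_mem_rect (x c : ℝ × ℝ) (a b : ℝ) : IsOpen {s : ℝ | x ∈ rect s c a b} := by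
  simp_rw [rect_eq_preimage]
  exact (isOpen_Ioo.prod isOpen_Ioo).preimage (continuous_rot_neg_sub x c)

lemma toReal_volume_rect (s : ℝ) (c : ℝ × ℝ) {a b : ℝ} (ha : 0 ≤ a) (hb : 0 ≤ b) :
    (volume (rect s c a b)).toReal = a * b := by
  rw [rect_eq_preimage, volume_preimage_rot_sub, Measure.volume_eq_prod, Measure.prod_prod,
    Real.volume_Ioo, Real.volume_Ioo]
  simp [ha, hb]

lemma diam_Ioo_prod_Ioo {a b : ℝ} (ha : 0 < a) (hb : 0 < b) :
    Metric.diam (Ioo 0 a ×ˢ Ioo 0 b) = max a b := by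
  have hbd : Bornology.IsBounded (Ioo 0 a ×ˢ Ioo 0 b) :=
    (Metric.isBounded_Ioo 0 a).prod (Metric.isBounded_Ioo 0 b)
  refine le_antisymm ?_ (max_le ?_ ?_)
  · refine Metric.diam_le_of_forall_dist_le (le_max_of_le_left ha.le) fun p hp q hq => ?_
    rw [Prod.dist_eq]
    exact max_le_max
      (by simpa using Real.dist_le_of_mem_Icc (Ioo_subset_Icc_self hp.1) (Ioo_subset_Icc_self hq.1))
      (by simpa using Real.dist_le_of_mem_Icc (Ioo_subset_Icc_self hp.2) (Ioo_subset_Icc_self hq.2))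
  · simpa [Real.diam_Ioo ha.le, fst_image_prod _ (nonempty_Ioo.2 hb)] using
      LipschitzWith.prod_fst.diam_image_le _ hbd
  · simpa [Real.diam_Ioo hb.le, snd_image_prod (nonempty_Ioo.2 ha)] using
      LipschitzWith.prod_snd.diam_image_le _ hbd

lemma diam_rect_le (s : ℝ) (c : ℝ × ℝ) {a b : ℝ} (ha : 0 < a) (hb : 0 < b) :
    Metric.diam (rect s c a b) ≤ 2 * max a b := by
  rw [← diam_Ioo_prod_Ioo ha hb]
  exact (lipschitzWith_add_rot s c).diam_image_le _
    ((Metric.isBounded_Ioo 0 a).prod (Metric.isBounded_Ioo 0 b))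

lemma max_le_two_mul_diam_rect (s : ℝ) (c : ℝ × ℝ) {a b : ℝ} (ha : 0 < a) (hb : 0 < b) :
    max a b ≤ 2 * Metric.diam (rect s c a b) := by
  rw [← diam_Ioo_prod_Ioo ha hb, Ioo_prod_Ioo_eq_image_rect s c]
  exact (lipschitzWith_rot_sub (-s) c).diam_image_le _ ((lipschitzWith_add_rot s c).isBounded_image
    ((Metric.isBounded_Ioo 0 a).prod (Metric.isBounded_Ioo 0 b)))

lemma continuous_setIntegral_rect {f : ℝ × ℝ → ℝ} (hf : Integrable f) (c : ℝ × ℝ) (a b : ℝ) :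
    Continuous fun s => ∫ p in rect s c a b, f p := by
  rw [continuous_iff_continuousAt]
  intro s₀
  simp_rw [← integral_indicator (isOpen_rect _ c a b).measurableSet]
  refine continuousAt_of_dominated (bound := fun x => ‖f x‖)
    (Eventually.of_forall fun s =>
      hf.aestronglyMeasurable.indicator (isOpen_rect s c a b).measurableSet)
    (Eventually.of_forall fun s => Eventually.of_forall fun x => norm_indicator_le_norm_self f x)
    hf.norm ?_
  have hnull : volume ((fun x => rot (-s₀) (x - c)) ⁻¹' frontier (Ioo 0 a ×ˢ Ioo 0 b)) = 0 := by
    rw [volume_preimage_rot_sub]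
    exact ((convex_Ioo 0 a).prod (convex_Ioo 0 b)).addHaar_frontier volume
  filter_upwards [measure_eq_zero_iff_ae_notMem.mp hnull] with x hx
  have : (fun s => (rect s c a b).indicator f x)
      = (Ioo 0 a ×ˢ Ioo 0 b).indicator (fun _ => f x) ∘ fun s => rot (-s) (x - c) := by
    ext s
    rw [rect_eq_preimage]
    by_cases h : rot (-s) (x - c) ∈ Ioo 0 a ×ˢ Ioo 0 b <;> simp [h]
  rw [this]
  have hx' : rot (-s₀) (x - c) ∉ frontier (Ioo 0 a ×ˢ Ioo 0 b) := hx
  exact ContinuousAt.comp (f := fun s : ℝ => rot (-s) (x - c)) (x := s₀)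
    (continuousOn_const.continuousAt_indicator hx') (continuous_rot_neg_sub x c).continuousAt

lemma hasBasis_rectFilter (s : ℝ) (x : ℝ × ℝ) :
    (rectFilter s x).HasBasis (· ∈ Ioi (0 : ℝ))
      fun d => {R | IsRect s R ∧ x ∈ R ∧ Metric.diam R < d} :=
  hasBasis_biInf_principal' (fun d hd e he => ⟨min d e, mem_Ioi.2 (lt_min hd he),
    fun _ hR => ⟨hR.1, hR.2.1, hR.2.2.trans_le (min_le_left d e)⟩,
    fun _ hR => ⟨hR.1, hR.2.1, hR.2.2.trans_le (min_le_right d e)⟩⟩) ⟨1, mem_Ioi.2 one_pos⟩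

lemma upperDeriv_eq_top_iff (s : ℝ) (f : ℝ × ℝ → ℝ) (x : ℝ × ℝ) :
    upperDeriv s f x = ⊤ ↔ ∀ d > 0, ∀ M : ℝ,
      ∃ R, (IsRect s R ∧ x ∈ R ∧ Metric.diam R < d) ∧ M < avg f R := by
  rw [upperDeriv, (hasBasis_rectFilter s x).limsup_eq_iInf_iSup]
  simp only [iInf_eq_top, EReal.eq_top_iff_forall_lt, lt_iSup_iff, EReal.coe_lt_coe_iff,
    mem_Ioi, exists_prop]
  rfl

def largeAvgSet (f : ℝ × ℝ → ℝ) (s M r : ℝ) : Set (ℝ × ℝ) :=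
  ⋃₀ {R | IsRectWith s (· < r) R ∧ M < avg f R}

lemma isOpen_largeAvgSet (f : ℝ × ℝ → ℝ) (s M r : ℝ) : IsOpen (largeAvgSet f s M r) :=
  isOpen_sUnion fun _ ⟨⟨c, a, b, _, _, _, _, hR⟩, _⟩ => hR ▸ isOpen_rect s c a b

lemma isOpen_setOf_mem_largeAvgSet {f : ℝ × ℝ → ℝ} (hf : Integrable f) (x : ℝ × ℝ) (M r : ℝ) :
    IsOpen {s | x ∈ largeAvgSet f s M r} := by
  refine isOpen_iff_mem_nhds.2 fun s₀ ⟨_, ⟨⟨c, a, b, ha, hb, har, hbr, rfl⟩, hM⟩, hx⟩ => ?_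
  have hcont : Continuous fun s => avg f (rect s c a b) := by
    simp_rw [avg, toReal_volume_rect _ c ha.le hb.le]
    exact (continuous_setIntegral_rect hf c a b).div_const _
  filter_upwards [(isOpen_setOf_mem_rect x c a b).mem_nhds hx,
    hcont.continuousAt.eventually (lt_mem_nhds hM)] with s hxs hMs
  exact ⟨rect s c a b, ⟨⟨c, a, b, ha, hb, har, hbr, rfl⟩, hMs⟩, hxs⟩

lemma upperDeriv_eq_top_iff_forall_mem_largeAvgSet (s : ℝ) (f : ℝ × ℝ → ℝ) (x : ℝ × ℝ) :
    upperDeriv s f x = ⊤ ↔ ∀ k : ℕ, x ∈ largeAvgSet f s k (1 / (k + 1)) := by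
  rw [upperDeriv_eq_top_iff]
  constructor
  · intro h k
    obtain ⟨_, ⟨⟨c, a, b, ha, hb, -, -, rfl⟩, hx, hd⟩, hM⟩ := h (1 / (2 * (k + 1))) (by positivity) k
    have hmax : max a b < 1 / (k + 1) :=
      calc max a b ≤ 2 * Metric.diam (rect s c a b) := max_le_two_mul_diam_rect s c ha hb
        _ < 2 * (1 / (2 * (k + 1))) := by gcongr
        _ = 1 / (k + 1) := by field_simp
    exact ⟨_, ⟨⟨c, a, b, ha, hb, (le_max_left a b).trans_lt hmax,
      (le_max_right a b).trans_lt hmax, rfl⟩, hM⟩, hx⟩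
  · intro h d hd M
    obtain ⟨k, hk⟩ := exists_nat_gt (max M (2 / d))
    obtain ⟨_, ⟨⟨c, a, b, ha, hb, har, hbr, rfl⟩, hM⟩, hx⟩ := h k
    have hkd : 2 / ((k : ℝ) + 1) < d := by
      have := (div_lt_iff₀ hd).1 ((le_max_right _ _).trans_lt hk)
      rw [div_lt_iff₀ (by positivity)]
      nlinarith
    refine ⟨_, ⟨⟨c, a, b, ha, hb, trivial, trivial, rfl⟩, hx, ?_⟩, ?_⟩
    · calc Metric.diam (rect s c a b) ≤ 2 * max a b := diam_rect_le s c ha hb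
        _ < 2 * (1 / (k + 1)) := by gcongr; exact max_lt har hbr
        _ < d := by rwa [mul_one_div]
    · exact ((le_max_left _ _).trans_lt hk).trans hM

section SetOfAeMem

variable {T X : Type*} [TopologicalSpace T] [MeasurableSpace X] (μ : Measure X) {U : T → Set X}

lemma lowerSemicontinuous_measure_of_isOpen_setOf_mem [FirstCountableTopology T]
    (hU : ∀ s, MeasurableSet (U s)) (hopen : ∀ x, IsOpen {s | x ∈ U s}) :
    LowerSemicontinuous fun s => μ (U s) := by
  refine lowerSemicontinuous_iff_le_liminf.2 fun s => ?_
  have hind : ∀ x, (U s).indicator (1 : X → ℝ≥0∞) x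
      ≤ liminf (fun s' => (U s').indicator (1 : X → ℝ≥0∞) x) (𝓝 s) := fun x =>
    lowerSemicontinuous_iff_le_liminf.1
      ((hopen x).lowerSemicontinuous_indicator (y := (1 : ℝ≥0∞)) zero_le) s
  calc μ (U s) = ∫⁻ x, (U s).indicator 1 x ∂μ := (lintegral_indicator_one (hU s)).symm
    _ ≤ ∫⁻ x, liminf (fun s' => (U s').indicator (1 : X → ℝ≥0∞) x) (𝓝 s) ∂μ :=
      lintegral_mono hind
    _ ≤ liminf (fun s' => ∫⁻ x, (U s').indicator 1 x ∂μ) (𝓝 s) :=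
      lintegral_liminf_le fun s' => measurable_one.indicator (hU s')
    _ = liminf (fun s' => μ (U s')) (𝓝 s) := by simp_rw [lintegral_indicator_one (hU _)]

lemma isGδ_setOf_ae_mem_of_isFiniteMeasure [FirstCountableTopology T] [IsFiniteMeasure μ]
    (hU : ∀ s, MeasurableSet (U s)) (hopen : ∀ x, IsOpen {s | x ∈ U s}) :
    IsGδ {s | ∀ᵐ x ∂μ, x ∈ U s} := by
  have key : ∀ s, (∀ᵐ x ∂μ, x ∈ U s) ↔ ∀ n : ℕ, μ univ < μ (U s) + (n : ℝ≥0∞)⁻¹ := fun s => by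
    rw [ae_mem_iff_measure_eq (hU s).nullMeasurableSet]
    refine ⟨fun h n => h ▸ ENNReal.lt_add_right (measure_ne_top μ _) (by simp), fun h => ?_⟩
    refine le_antisymm (measure_mono (subset_univ _)) ?_
    simpa using ge_of_tendsto' (tendsto_const_nhds.add ENNReal.tendsto_inv_nat_nhds_zero)
      fun n => (h n).le
  simp_rw [key, ofPred_forall]
  exact .iInter fun n => ((lowerSemicontinuous_measure_of_isOpen_setOf_mem μ hU hopen).add
    lowerSemicontinuous_const).isOpen_preimage _ |>.isGδ

lemma isGδ_setOf_ae_mem [FirstCountableTopology T] [SigmaFinite μ]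
    (hU : ∀ s, MeasurableSet (U s)) (hopen : ∀ x, IsOpen {s | x ∈ U s}) :
    IsGδ {s | ∀ᵐ x ∂μ, x ∈ U s} := by
  have : {s | ∀ᵐ x ∂μ, x ∈ U s}
      = ⋂ m, {s | ∀ᵐ x ∂μ.restrict (spanningSets μ m), x ∈ U s} := by
    ext s
    simp only [mem_ofPred_eq, mem_iInter]
    rw [← ae_restrict_iUnion_iff, iUnion_spanningSets, Measure.restrict_univ]
  rw [this]
  refine .iInter fun m => ?_
  have := isFiniteMeasure_restrict.2 (measure_spanningSets_lt_top μ m).ne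
  exact isGδ_setOf_ae_mem_of_isFiniteMeasure _ hU hopen

end SetOfAeMem

lemma isGδ_setOf_ae_upperDeriv_eq_top {f : ℝ × ℝ → ℝ} (hf : Integrable f) :
    IsGδ {s | ∀ᵐ x : ℝ × ℝ, upperDeriv s f x = ⊤} := by
  simp_rw [upperDeriv_eq_top_iff_forall_mem_largeAvgSet, ae_all_iff, ofPred_forall]
  exact .iInter fun k => isGδ_setOf_ae_mem volume
    (fun s => (isOpen_largeAvgSet f s _ _).measurableSet)
    (fun x => isOpen_setOf_mem_largeAvgSet hf x _ _)

lemma IsGδ.isGdeltaIn {S : Set ℝ} (hS : IsGδ S) : IsGdeltaIn {s | s ∈ Ico 0 (π / 2) ∧ s ∈ S} := by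
  obtain ⟨G, hG, rfl⟩ := isGδ_iff_eq_iInter_nat.1 hS
  exact ⟨G, hG, by ext; simp [and_comm]⟩

/-- for every `f ∈ L¹(ℝ²)`, the set of slopes `s ∈ [0, π/2)` for which
`D̄_s f (x) = ∞` almost everywhere is a `G_δ` set in `[0, π/2)`. -/
theorem gdelta_of_ae_infinite_upperDeriv (f : ℝ × ℝ → ℝ) (hf : Integrable f) :
    IsGdeltaIn {s : ℝ | s ∈ Set.Ico 0 (π / 2) ∧ ∀ᵐ x : ℝ × ℝ, upperDeriv s f x = ⊤} :=
  (isGδ_setOf_ae_upperDeriv_eq_top hf).isGdeltaIn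

end
end

section
/- Let 0 < ε < 1 and 0 < γ < π/12, and let θ_k = (ε/2^{|k|}, sign(k)·tan(γ)·ε/2^{|k|}) for k = ±1, ±2, …. Then for every rectangle R ∈ R_s with 3γ < |s| < π/2 − 3γ and every m ≥ 1, one has |Σ_{0 < |k| ≤ m, θ_k ∈ R} sign(k)| ≤ 2. -/
open MeasureTheory Filter Set Real
open scoped ENNReal

noncomputable section

/-- Abstract counting lemma. -/
theorem count_aux' (P N : Finset ℤ)
    (hPint : ∀ k1 k2 k3 : ℤ, k1 ∈ P → k3 ∈ P → k1 ≤ k2 → k2 ≤ k3 → k2 ∈ P)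
    (hG : ∀ k : ℤ, k - 1 ∈ P → k + 1 ∈ P → -k ∈ N) :
    P.card ≤ N.card + 2 := by
  rcases P.eq_empty_or_nonempty with rfl | hne
  · simp
  set a := P.min' hne with ha
  set b := P.max' hne with hb
  have hab : a ≤ b := P.min'_le _ (P.max'_mem hne)
  have hPeq : P = Finset.Icc a b := by
    apply Finset.Subset.antisymm
    · intro k hk
      exact Finset.mem_Icc.mpr ⟨P.min'_le _ hk, P.le_max' _ hk⟩
    · intro k hk
      rw [Finset.mem_Icc] at hk
      exact hPint a k b (P.min'_mem hne) (P.max'_mem hne) hk.1 hk.2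
  have hinj : ∀ k ∈ Finset.Icc (a+1) (b-1), -k ∈ N := by
    intro k hk
    rw [Finset.mem_Icc] at hk
    refine hG k ?_ ?_ <;> · rw [hPeq, Finset.mem_Icc]; omega
  have hcard : (Finset.Icc (a+1) (b-1)).card ≤ N.card := by
    apply Finset.card_le_card_of_injOn (fun k => -k) hinj
    intro x _ y _ h
    simpa using h
  rw [hPeq]
  rw [Int.card_Icc] at *
  omega

/-- Membership in a rectangle, in rotated coordinates. -/
theorem mem_rect_aux' (s a b : ℝ) (c x : ℝ × ℝ) :
    x ∈ rect s c a b ↔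
      (0 < (x.1 - c.1) * Real.cos s + (x.2 - c.2) * Real.sin s ∧
        (x.1 - c.1) * Real.cos s + (x.2 - c.2) * Real.sin s < a ∧
        0 < -((x.1 - c.1) * Real.sin s) + (x.2 - c.2) * Real.cos s ∧
        -((x.1 - c.1) * Real.sin s) + (x.2 - c.2) * Real.cos s < b) := by
  have pyth := Real.sin_sq_add_cos_sq s
  constructor
  · rintro ⟨y, ⟨⟨hy1, hy2⟩, hy3, hy4⟩, rfl⟩
    simp only [rot, Prod.fst_add, Prod.snd_add]
    refine ⟨?_, ?_, ?_, ?_⟩ <;> · ring_nf; nlinarith [pyth, hy1, hy2, hy3, hy4]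
  · rintro ⟨h1, h2, h3, h4⟩
    refine ⟨((x.1 - c.1) * Real.cos s + (x.2 - c.2) * Real.sin s,
      -((x.1 - c.1) * Real.sin s) + (x.2 - c.2) * Real.cos s), ⟨⟨h1, h2⟩, h3, h4⟩, ?_⟩
    simp only [rot, Prod.ext_iff, Prod.fst_add, Prod.snd_add]
    constructor
    · linear_combination (x.1 - c.1) * pyth
    · linear_combination (x.2 - c.2) * pyth

/-- Sandwich lemma: if `2tX` and `(t/2)X` are in the interval `(q, q+b)` and `Y` is
strictly between `min (2X) (X/2)` and `max (2X) (X/2)`, then `tY ∈ (q, q+b)`. -/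
theorem sandwich_aux' (t X Y q b : ℝ) (ht : 0 < t)
    (h1 : q < 2 * t * X) (h2 : 2 * t * X < q + b)
    (h3 : q < t / 2 * X) (h4 : t / 2 * X < q + b)
    (h5 : min (2 * X) (X / 2) < Y) (h6 : Y < max (2 * X) (X / 2)) :
    q < t * Y ∧ t * Y < q + b := by
  rcases le_total X 0 with hX | hX
  · have hmin : min (2*X) (X/2) = 2*X := min_eq_left (by linarith)
    have hmax : max (2*X) (X/2) = X/2 := max_eq_right (by linarith)
    rw [hmin] at h5; rw [hmax] at h6
    constructor <;> nlinarith
  · have hmin : min (2*X) (X/2) = X/2 := min_eq_right (by linarith)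
    have hmax : max (2*X) (X/2) = 2*X := max_eq_left (by linarith)
    rw [hmin] at h5; rw [hmax] at h6
    constructor <;> nlinarith

/-- Betweenness lemma. -/
theorem between_aux' (X q b t1 t2 t3 : ℝ) (h32 : t3 ≤ t2) (h21 : t2 ≤ t1)
    (c1l : q < t1 * X) (c1u : t1 * X < q + b)
    (c3l : q < t3 * X) (c3u : t3 * X < q + b) :
    q < t2 * X ∧ t2 * X < q + b := by
  rcases le_total X 0 with h | h
  · constructor <;> nlinarith
  · constructor <;> nlinarith


set_option maxHeartbeats 2000000 in
open Classical in
/-- for any rectangle `R` of slope `s` with `3γ < |s| < π/2 - 3γ`,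
`|Σ_{0 < |k| ≤ m, θ_k ∈ R} sign k| ≤ 2`. -/
theorem abs_sum_sign_theta_le_two (ε γ : ℝ) (hε : 0 < ε ∧ ε < 1) (hγ : 0 < γ ∧ γ < π / 12)
    (s : ℝ) (hs : 3 * γ < |s| ∧ |s| < π / 2 - 3 * γ)
    (R : Set (ℝ × ℝ)) (hR : IsRect s R) (m : ℕ) (hm : 1 ≤ m) :
    |∑ k ∈ Finset.Icc (-(m : ℤ)) (m : ℤ),
        if k ≠ 0 ∧ theta ε γ k ∈ R then k.sign else 0| ≤ 2 := by
  obtain ⟨hε0, hε1⟩ := hε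
  obtain ⟨hγ0, hγ1⟩ := hγ
  obtain ⟨hs1, hs2⟩ := hs
  obtain ⟨c, a, b, ha, hb, -, -, rfl⟩ := hR
  -- ## Trigonometric facts
  have hpi := Real.pi_gt_three
  have hγπ : γ < π/2 := by nlinarith
  have hcγ : 0 < Real.cos γ := Real.cos_pos_of_mem_Ioo ⟨by linarith, hγπ⟩
  have hsγ : 0 < Real.sin γ := Real.sin_pos_of_pos_of_lt_pi hγ0 (by nlinarith)
  have hT : 0 < Real.tan γ := Real.tan_pos_of_pos_of_lt_pi_div_two hγ0 hγπ
  have hukey : 3 * Real.sin γ * Real.cos (3*γ) ≤ Real.cos γ * Real.sin (3*γ) := by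
    have hs3 := Real.sin_three_mul γ
    have hc3 := Real.cos_three_mul γ
    have pyth := Real.sin_sq_add_cos_sq γ
    have key : Real.cos γ * Real.sin (3*γ) - 3 * Real.sin γ * Real.cos (3*γ)
        = 8 * Real.sin γ ^ 3 * Real.cos γ := by
      rw [hs3, hc3]; linear_combination (-12 * Real.sin γ * Real.cos γ) * pyth
    nlinarith [pow_pos hsγ 3]
  have hkey : 3 * Real.tan γ * Real.cos (3*γ) ≤ Real.sin (3*γ) := by
    have e : 3 * Real.tan γ * Real.cos (3*γ) = (3 * Real.sin γ * Real.cos (3*γ))/Real.cos γ := by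
      rw [Real.tan_eq_sin_div_cos]; ring
    rw [e, div_le_iff₀ hcγ]; nlinarith
  have hu3 : 3*γ < |s| := hs1
  have huπ : |s| < π/2 - 3*γ := hs2
  have hu0 : 0 < |s| := by linarith
  have hcos : Real.cos s = Real.cos |s| := (Real.cos_abs s).symm
  have hsin : |Real.sin s| = Real.sin |s| := by
    rcases abs_cases s with ⟨h, hs0⟩ | ⟨h, hs0⟩
    · rw [h, abs_of_nonneg (Real.sin_nonneg_of_nonneg_of_le_pi hs0 (by nlinarith))]
    · rw [h, Real.sin_neg, abs_of_nonpos]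
      exact Real.sin_nonpos_of_nonpos_of_neg_pi_le (by linarith) (by nlinarith)
  have hc1 : Real.cos |s| < Real.cos (3*γ) :=
    Real.cos_lt_cos_of_nonneg_of_le_pi (by positivity) (by nlinarith) hu3
  have hc2 : Real.sin (3*γ) < Real.sin |s| :=
    Real.sin_lt_sin_of_lt_of_le_pi_div_two (by nlinarith) (by linarith) hu3
  have hc3 : Real.sin |s| < Real.cos (3*γ) := by
    rw [← Real.sin_pi_div_two_sub]
    exact Real.sin_lt_sin_of_lt_of_le_pi_div_two (by linarith) (by nlinarith) (by linarith)
  have hc4 : Real.sin (3*γ) < Real.cos |s| := by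
    rw [← Real.sin_pi_div_two_sub]
    exact Real.sin_lt_sin_of_lt_of_le_pi_div_two (by nlinarith) (by linarith) (by linarith)
  have hs3γpos : 0 < Real.sin (3*γ) := Real.sin_pos_of_pos_of_lt_pi (by linarith) (by nlinarith)
  have hT3 : (0:ℝ) < 3 * Real.tan γ := by linarith
  have hcs : 0 < Real.cos s := by rw [hcos]; linarith
  have hI : 3 * Real.tan γ * |Real.sin s| < Real.cos s := by
    rw [hcos, hsin]
    have := mul_lt_mul_of_pos_left hc3 hT3
    linarith
  have hII : 3 * Real.tan γ * Real.cos s < |Real.sin s| := by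
    rw [hcos, hsin]
    have := mul_lt_mul_of_pos_left hc1 hT3
    linarith
  -- consequences for the coefficients
  have habs1 : Real.tan γ * Real.sin s ≤ Real.tan γ * |Real.sin s| :=
    mul_le_mul_of_nonneg_left (le_abs_self _) hT.le
  have habs2 : -(Real.tan γ * Real.sin s) ≤ Real.tan γ * |Real.sin s| := by
    rw [← mul_neg]
    exact mul_le_mul_of_nonneg_left (neg_le_abs _) hT.le
  have hIc1 : 3 * (Real.tan γ * Real.sin s) < Real.cos s := by nlinarith
  have hIc2 : -(3 * (Real.tan γ * Real.sin s)) < Real.cos s := by nlinarith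
  have hTc : 0 < Real.tan γ * Real.cos s := mul_pos hT hcs
  have hsne : s ≠ 0 := by
    intro h; rw [h] at hu0; simp at hu0
  have hsgn : (0 < Real.sin s ∧ 3 * (Real.tan γ * Real.cos s) < Real.sin s) ∨
      (Real.sin s < 0 ∧ 3 * (Real.tan γ * Real.cos s) < -Real.sin s) := by
    rcases lt_or_gt_of_ne hsne with h | h
    · right
      have hbnd := abs_lt.mp (show |s| < π/2 by linarith)
      have hsneg : Real.sin s < 0 :=
        Real.sin_neg_of_neg_of_neg_pi_lt h (by linarith)
      refine ⟨hsneg, ?_⟩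
      rw [abs_of_neg hsneg] at hII
      linarith
    · left
      have hspos : Real.sin s > 0 := by
        apply Real.sin_pos_of_pos_of_lt_pi h
        have := abs_lt.mp (show |s| < π/2 by linarith)
        linarith
      refine ⟨hspos, ?_⟩
      rw [abs_of_pos hspos] at hII
      linarith
  -- positivity of the `A` coefficients
  have hA1pos : 0 < Real.cos s + Real.tan γ * Real.sin s := by linarith
  have hAmpos : 0 < Real.cos s - Real.tan γ * Real.sin s := by linarith
  -- min/max facts
  have hMA1 : min (2*(Real.cos s + Real.tan γ * Real.sin s)) ((Real.cos s + Real.tan γ * Real.sin s)/2)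
        < Real.cos s - Real.tan γ * Real.sin s ∧
      Real.cos s - Real.tan γ * Real.sin s
        < max (2*(Real.cos s + Real.tan γ * Real.sin s)) ((Real.cos s + Real.tan γ * Real.sin s)/2) :=
    ⟨lt_of_le_of_lt (min_le_right _ _) (by linarith),
     lt_of_lt_of_le (by linarith) (le_max_left _ _)⟩
  have hMA2 : min (2*(Real.cos s - Real.tan γ * Real.sin s)) ((Real.cos s - Real.tan γ * Real.sin s)/2)
        < Real.cos s + Real.tan γ * Real.sin s ∧
      Real.cos s + Real.tan γ * Real.sin s
        < max (2*(Real.cos s - Real.tan γ * Real.sin s)) ((Real.cos s - Real.tan γ * Real.sin s)/2) :=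
    ⟨lt_of_le_of_lt (min_le_right _ _) (by linarith),
     lt_of_lt_of_le (by linarith) (le_max_left _ _)⟩
  have hMB1 : min (2*(Real.tan γ * Real.cos s - Real.sin s)) ((Real.tan γ * Real.cos s - Real.sin s)/2)
        < -(Real.tan γ * Real.cos s) - Real.sin s ∧
      -(Real.tan γ * Real.cos s) - Real.sin s
        < max (2*(Real.tan γ * Real.cos s - Real.sin s)) ((Real.tan γ * Real.cos s - Real.sin s)/2) := by
    rcases hsgn with ⟨h1, h2⟩ | ⟨h1, h2⟩
    · exact ⟨lt_of_le_of_lt (min_le_left _ _) (by linarith),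
        lt_of_lt_of_le (by linarith) (le_max_right _ _)⟩
    · exact ⟨lt_of_le_of_lt (min_le_right _ _) (by linarith),
        lt_of_lt_of_le (by linarith) (le_max_left _ _)⟩
  have hMB2 : min (2*(-(Real.tan γ * Real.cos s) - Real.sin s)) ((-(Real.tan γ * Real.cos s) - Real.sin s)/2)
        < Real.tan γ * Real.cos s - Real.sin s ∧
      Real.tan γ * Real.cos s - Real.sin s
        < max (2*(-(Real.tan γ * Real.cos s) - Real.sin s)) ((-(Real.tan γ * Real.cos s) - Real.sin s)/2) := by
    rcases hsgn with ⟨h1, h2⟩ | ⟨h1, h2⟩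
    · exact ⟨lt_of_le_of_lt (min_le_left _ _) (by linarith),
        lt_of_lt_of_le (by linarith) (le_max_right _ _)⟩
    · exact ⟨lt_of_le_of_lt (min_le_right _ _) (by linarith),
        lt_of_lt_of_le (by linarith) (le_max_left _ _)⟩
  -- ## membership characterizations
  have hthetaP : ∀ k : ℤ, 0 < k →
      theta ε γ k = ((ε/2^k.natAbs : ℝ), Real.tan γ * (ε/2^k.natAbs)) := by
    intro k hk
    rw [theta, Int.sign_eq_one_of_pos hk, Prod.mk.injEq]
    push_cast
    exact ⟨rfl, by ring⟩
  have hthetaN : ∀ k : ℤ, k < 0 →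
      theta ε γ k = ((ε/2^k.natAbs : ℝ), -(Real.tan γ * (ε/2^k.natAbs))) := by
    intro k hk
    rw [theta, Int.sign_eq_neg_one_of_neg hk, Prod.mk.injEq]
    push_cast
    exact ⟨rfl, by ring⟩
  have hmemPt : ∀ t : ℝ, ((t, Real.tan γ * t) ∈ rect s c a b ↔
      (c.1 * Real.cos s + c.2 * Real.sin s < t * (Real.cos s + Real.tan γ * Real.sin s) ∧
        t * (Real.cos s + Real.tan γ * Real.sin s) < c.1 * Real.cos s + c.2 * Real.sin s + a ∧
        -(c.1 * Real.sin s) + c.2 * Real.cos s < t * (Real.tan γ * Real.cos s - Real.sin s) ∧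
        t * (Real.tan γ * Real.cos s - Real.sin s) < -(c.1 * Real.sin s) + c.2 * Real.cos s + b)) := by
    intro t
    rw [mem_rect_aux']
    dsimp only
    constructor <;> rintro ⟨h1, h2, h3, h4⟩ <;>
      exact ⟨by linarith [h1], by linarith [h2], by linarith [h3], by linarith [h4]⟩
  have hmemNt : ∀ t : ℝ, ((t, -(Real.tan γ * t)) ∈ rect s c a b ↔
      (c.1 * Real.cos s + c.2 * Real.sin s < t * (Real.cos s - Real.tan γ * Real.sin s) ∧
        t * (Real.cos s - Real.tan γ * Real.sin s) < c.1 * Real.cos s + c.2 * Real.sin s + a ∧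
        -(c.1 * Real.sin s) + c.2 * Real.cos s < t * (-(Real.tan γ * Real.cos s) - Real.sin s) ∧
        t * (-(Real.tan γ * Real.cos s) - Real.sin s) < -(c.1 * Real.sin s) + c.2 * Real.cos s + b)) := by
    intro t
    rw [mem_rect_aux']
    dsimp only
    constructor <;> rintro ⟨h1, h2, h3, h4⟩ <;>
      exact ⟨by linarith [h1], by linarith [h2], by linarith [h3], by linarith [h4]⟩
  set pp := c.1 * Real.cos s + c.2 * Real.sin s with hpp
  set qq := -(c.1 * Real.sin s) + c.2 * Real.cos s with hqq
  -- ## dyadic arithmetic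
  have hmono : ∀ n1 n2 : ℕ, n1 ≤ n2 → ε/2^n2 ≤ ε/2^n1 := by
    intro n1 n2 h
    apply div_le_div_of_nonneg_left hε0.le (by positivity)
    exact pow_le_pow_right₀ (by norm_num) h
  have htpos : ∀ n : ℕ, (0:ℝ) < ε/2^n := by
    intro n; positivity
  have hpow1 : ∀ n : ℕ, 1 ≤ n → ε / 2^(n-1) = 2*(ε/2^n) := by
    intro n hn
    have h2 : (2:ℝ)^n = 2^(n-1)*2 := by
      conv_lhs => rw [show n = (n-1)+1 by omega]
      rw [pow_succ]
    rw [h2]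
    have : (2:ℝ)^(n-1) ≠ 0 := by positivity
    field_simp
  have hpow2 : ∀ n : ℕ, ε / 2^(n+1) = (ε/2^n)/2 := by
    intro n
    rw [pow_succ]
    ring
  -- ## counting setup
  set P := (Finset.Icc (-(m:ℤ)) (m:ℤ)).filter
    (fun k => 0 < k ∧ theta ε γ k ∈ rect s c a b) with hP
  set N := (Finset.Icc (-(m:ℤ)) (m:ℤ)).filter
    (fun k => k < 0 ∧ theta ε γ k ∈ rect s c a b) with hN
  have hsum : ∑ k ∈ Finset.Icc (-(m:ℤ)) (m:ℤ),
      (if k ≠ 0 ∧ theta ε γ k ∈ rect s c a b then k.sign else 0)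
      = (P.card : ℤ) - (N.card : ℤ) := by
    rw [hP, hN, ← Finset.sum_boole, ← Finset.sum_boole, ← Finset.sum_sub_distrib]
    apply Finset.sum_congr rfl
    intro k _
    rcases lt_trichotomy k 0 with h | h | h
    · have h1 : k.sign = -1 := Int.sign_eq_neg_one_of_neg h
      have h2 : k ≠ 0 := by omega
      by_cases hq : theta ε γ k ∈ rect s c a b <;>
        simp [h1, h2, hq, h, not_lt.mpr (le_of_lt h)]
    · simp [h]
    · have h1 : k.sign = 1 := Int.sign_eq_one_of_pos h
      have h2 : k ≠ 0 := by omega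
      by_cases hq : theta ε γ k ∈ rect s c a b <;>
        simp [h1, h2, hq, h, not_lt.mpr (le_of_lt h)]
  -- interval property for P
  have hPint : ∀ k1 k2 k3 : ℤ, k1 ∈ P → k3 ∈ P → k1 ≤ k2 → k2 ≤ k3 → k2 ∈ P := by
    intro k1 k2 k3 h1 h3 h12 h23
    rw [hP, Finset.mem_filter, Finset.mem_Icc] at h1 h3 ⊢
    obtain ⟨⟨h1a, h1b⟩, h1p, h1q⟩ := h1
    obtain ⟨⟨h3a, h3b⟩, h3p, h3q⟩ := h3
    have h2p : 0 < k2 := lt_of_lt_of_le h1p h12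
    refine ⟨⟨by omega, by omega⟩, h2p, ?_⟩
    rw [hthetaP _ h1p] at h1q
    rw [hthetaP _ h3p] at h3q
    rw [hthetaP _ h2p]
    rw [hmemPt] at h1q h3q ⊢
    obtain ⟨q1, q2, q3, q4⟩ := h1q
    obtain ⟨r1, r2, r3, r4⟩ := h3q
    have e21 : ε/2^k2.natAbs ≤ ε/2^k1.natAbs := hmono _ _ (by omega)
    have e32 : ε/2^k3.natAbs ≤ ε/2^k2.natAbs := hmono _ _ (by omega)
    obtain ⟨w1, w2⟩ := between_aux' (Real.cos s + Real.tan γ * Real.sin s) pp a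
      (ε/2^k1.natAbs) (ε/2^k2.natAbs) (ε/2^k3.natAbs) e32 e21 q1 q2 r1 r2
    obtain ⟨w3, w4⟩ := between_aux' (Real.tan γ * Real.cos s - Real.sin s) qq b
      (ε/2^k1.natAbs) (ε/2^k2.natAbs) (ε/2^k3.natAbs) e32 e21 q3 q4 r3 r4
    exact ⟨w1, w2, w3, w4⟩
  -- interval property for N
  have hNint : ∀ k1 k2 k3 : ℤ, k1 ∈ N → k3 ∈ N → k1 ≤ k2 → k2 ≤ k3 → k2 ∈ N := by
    intro k1 k2 k3 h1 h3 h12 h23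
    rw [hN, Finset.mem_filter, Finset.mem_Icc] at h1 h3 ⊢
    obtain ⟨⟨h1a, h1b⟩, h1p, h1q⟩ := h1
    obtain ⟨⟨h3a, h3b⟩, h3p, h3q⟩ := h3
    have h2p : k2 < 0 := lt_of_le_of_lt h23 h3p
    refine ⟨⟨by omega, by omega⟩, h2p, ?_⟩
    rw [hthetaN _ h1p] at h1q
    rw [hthetaN _ h3p] at h3q
    rw [hthetaN _ h2p]
    rw [hmemNt] at h1q h3q ⊢
    obtain ⟨q1, q2, q3, q4⟩ := h1q
    obtain ⟨r1, r2, r3, r4⟩ := h3q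
    have e21 : ε/2^k1.natAbs ≤ ε/2^k2.natAbs := hmono _ _ (by omega)
    have e32 : ε/2^k2.natAbs ≤ ε/2^k3.natAbs := hmono _ _ (by omega)
    obtain ⟨w1, w2⟩ := between_aux' (Real.cos s - Real.tan γ * Real.sin s) pp a
      (ε/2^k3.natAbs) (ε/2^k2.natAbs) (ε/2^k1.natAbs) e21 e32 r1 r2 q1 q2
    obtain ⟨w3, w4⟩ := between_aux' (-(Real.tan γ * Real.cos s) - Real.sin s) qq b
      (ε/2^k3.natAbs) (ε/2^k2.natAbs) (ε/2^k1.natAbs) e21 e32 r3 r4 q3 q4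
    exact ⟨w1, w2, w3, w4⟩
  -- gap property: positive triple gives a negative point
  have hG1 : ∀ k : ℤ, k - 1 ∈ P → k + 1 ∈ P → -k ∈ N := by
    intro k h1 h2
    rw [hP, Finset.mem_filter, Finset.mem_Icc] at h1 h2
    obtain ⟨⟨h1a, h1b⟩, h1p, h1q⟩ := h1
    obtain ⟨⟨h2a, h2b⟩, h2p, h2q⟩ := h2
    have hk2 : 2 ≤ k := by omega
    set n := k.natAbs with hn
    have hn1 : 1 ≤ n := by omega
    have ekm : (k-1).natAbs = n - 1 := by omega
    have ekp : (k+1).natAbs = n + 1 := by omega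
    have ekn : (-k).natAbs = n := by omega
    rw [hthetaP _ h1p, ekm, hmemPt, hpow1 n hn1] at h1q
    rw [hthetaP _ h2p, ekp, hmemPt, hpow2 n] at h2q
    obtain ⟨q1, q2, q3, q4⟩ := h1q
    obtain ⟨r1, r2, r3, r4⟩ := h2q
    rw [hN, Finset.mem_filter, Finset.mem_Icc]
    refine ⟨⟨by omega, by omega⟩, by omega, ?_⟩
    rw [hthetaN _ (by omega : -k < 0), ekn, hmemNt]
    obtain ⟨w1, w2⟩ := sandwich_aux' (ε/2^n) (Real.cos s + Real.tan γ * Real.sin s)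
      (Real.cos s - Real.tan γ * Real.sin s) pp a (htpos n)
      (by linarith [q1]) (by linarith [q2]) (by linarith [r1]) (by linarith [r2])
      hMA1.1 hMA1.2
    obtain ⟨w3, w4⟩ := sandwich_aux' (ε/2^n) (Real.tan γ * Real.cos s - Real.sin s)
      (-(Real.tan γ * Real.cos s) - Real.sin s) qq b (htpos n)
      (by linarith [q3]) (by linarith [q4]) (by linarith [r3]) (by linarith [r4])
      hMB1.1 hMB1.2
    exact ⟨w1, w2, w3, w4⟩
  -- gap property: negative triple gives a positive point
  have hG2 : ∀ k : ℤ, k - 1 ∈ N → k + 1 ∈ N → -k ∈ P := by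
    intro k h1 h2
    rw [hN, Finset.mem_filter, Finset.mem_Icc] at h1 h2
    obtain ⟨⟨h1a, h1b⟩, h1p, h1q⟩ := h1
    obtain ⟨⟨h2a, h2b⟩, h2p, h2q⟩ := h2
    have hk2 : k ≤ -2 := by omega
    set n := k.natAbs with hn
    have hn1 : 1 ≤ n := by omega
    have ekm : (k-1).natAbs = n + 1 := by omega
    have ekp : (k+1).natAbs = n - 1 := by omega
    have ekn : (-k).natAbs = n := by omega
    rw [hthetaN _ h1p, ekm, hmemNt, hpow2 n] at h1q
    rw [hthetaN _ h2p, ekp, hmemNt, hpow1 n hn1] at h2q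
    obtain ⟨q1, q2, q3, q4⟩ := h1q
    obtain ⟨r1, r2, r3, r4⟩ := h2q
    rw [hP, Finset.mem_filter, Finset.mem_Icc]
    refine ⟨⟨by omega, by omega⟩, by omega, ?_⟩
    rw [hthetaP _ (by omega : 0 < -k), ekn, hmemPt]
    obtain ⟨w1, w2⟩ := sandwich_aux' (ε/2^n) (Real.cos s - Real.tan γ * Real.sin s)
      (Real.cos s + Real.tan γ * Real.sin s) pp a (htpos n)
      (by linarith [r1]) (by linarith [r2]) (by linarith [q1]) (by linarith [q2])
      hMA2.1 hMA2.2
    obtain ⟨w3, w4⟩ := sandwich_aux' (ε/2^n) (-(Real.tan γ * Real.cos s) - Real.sin s)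
      (Real.tan γ * Real.cos s - Real.sin s) qq b (htpos n)
      (by linarith [r3]) (by linarith [r4]) (by linarith [q3]) (by linarith [q4])
      hMB2.1 hMB2.2
    exact ⟨w1, w2, w3, w4⟩
  have hPN : P.card ≤ N.card + 2 := count_aux' P N hPint hG1
  have hNP : N.card ≤ P.card + 2 := count_aux' N P hNint hG2
  rw [hsum]
  rw [abs_le]
  omega


end
end

section
/- Let 0 < ε < 1 and 0 < γ < π/12, and let θ_k = (ε/2^{|k|}, sign(k)·tan(γ)·ε/2^{|k|}) for k = ±1, ±2, …. If a line l ⊆ ℝ² intersects both line segments [θ_k, θ_{−k}] and [θ_{k+1}, θ_{−(k+1)}] for some k ≥ 1, then arg l < 3γ. -/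
open MeasureTheory Filter Set Real
open scoped ENNReal

noncomputable section

/-- The (minimal, positive) angle between a line of direction `v` and the `x`-axis. -/
def argDir (v : ℝ × ℝ) : ℝ :=
  if v.1 = 0 then π / 2 else Real.arctan |v.2 / v.1|

lemma aux_ne_odd_mul_pi_div_two {x : ℝ} (h0 : 0 < x) (h2 : x < π / 2) :
    ∀ j : ℤ, x ≠ (2 * j + 1) * π / 2 := by
  intro j hx
  rcases le_or_gt 0 j with hj | hj
  · have h1 : (1 : ℝ) ≤ 2 * (j : ℝ) + 1 := by
      have : (0 : ℝ) ≤ (j : ℝ) := by exact_mod_cast hj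
      linarith
    nlinarith [Real.pi_pos]
  · have h1 : 2 * (j : ℝ) + 1 ≤ -1 := by
      have hj' : j ≤ -1 := by omega
      have : (j : ℝ) ≤ -1 := by exact_mod_cast hj'
      linarith
    nlinarith [Real.pi_pos]

lemma aux_three_tan_lt {γ : ℝ} (h0 : 0 < γ) (h1 : γ < π / 12) :
    3 * Real.tan γ < Real.tan (3 * γ) := by
  have hπ := Real.pi_pos
  have hγ2 : γ < π / 2 := by linarith
  have ht : 0 < Real.tan γ := Real.tan_pos_of_pos_of_lt_pi_div_two h0 hγ2
  have hs3 : (1 : ℝ) < Real.sqrt 3 := by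
    rw [show (1 : ℝ) = Real.sqrt 1 by simp]
    exact Real.sqrt_lt_sqrt (by norm_num) (by norm_num)
  have ht6 : Real.tan γ < 1 / Real.sqrt 3 := by
    rw [← Real.tan_pi_div_six]
    exact Real.tan_lt_tan_of_nonneg_of_lt_pi_div_two h0.le (by linarith) (by linarith)
  have hT6 : Real.tan (2 * γ) < 1 / Real.sqrt 3 := by
    rw [← Real.tan_pi_div_six]
    exact Real.tan_lt_tan_of_nonneg_of_lt_pi_div_two (by linarith) (by linarith) (by linarith)
  have hTpos : 0 < Real.tan (2 * γ) :=
    Real.tan_pos_of_pos_of_lt_pi_div_two (by linarith) (by linarith)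
  have hs3sq : Real.sqrt 3 ^ 2 = 3 := Real.sq_sqrt (by norm_num)
  have hs3pos : (0 : ℝ) < Real.sqrt 3 := by linarith
  have hinv : (1 : ℝ) / Real.sqrt 3 < 1 := by
    rw [div_lt_one hs3pos]; exact hs3
  have htlt1 : Real.tan γ < 1 := lt_trans ht6 hinv
  have hprod : Real.tan (2 * γ) * Real.tan γ < 1 / 3 := by
    have hmul : Real.sqrt 3 * Real.sqrt 3 = 3 := Real.mul_self_sqrt (by norm_num)
    have h13 : (1 : ℝ) / Real.sqrt 3 * (1 / Real.sqrt 3) = 1 / 3 := by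
      rw [div_mul_div_comm, one_mul, hmul]
    calc Real.tan (2 * γ) * Real.tan γ < 1 / Real.sqrt 3 * (1 / Real.sqrt 3) := by
          apply mul_lt_mul' hT6.le ht6 ht.le (by positivity)
      _ = 1 / 3 := h13
  -- tan (2γ) > 2 tan γ
  have hden : 0 < 1 - Real.tan γ ^ 2 := by nlinarith
  have h2mul : Real.tan (2 * γ) = 2 * Real.tan γ / (1 - Real.tan γ ^ 2) :=
    Real.tan_two_mul
  have hT2gt : 2 * Real.tan γ < Real.tan (2 * γ) := by
    rw [h2mul, lt_div_iff₀ hden]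
    nlinarith [mul_pos ht (mul_pos ht ht)]
  -- tan (3γ)
  have hadd : Real.tan (2 * γ + γ) =
      (Real.tan (2 * γ) + Real.tan γ) / (1 - Real.tan (2 * γ) * Real.tan γ) := by
    apply Real.tan_add'
    exact ⟨aux_ne_odd_mul_pi_div_two (by linarith) (by linarith),
      aux_ne_odd_mul_pi_div_two h0 hγ2⟩
  have h3 : (3 : ℝ) * γ = 2 * γ + γ := by ring
  rw [h3, hadd]
  have hd : 0 < 1 - Real.tan (2 * γ) * Real.tan γ := by linarith
  rw [lt_div_iff₀ hd]
  nlinarith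

lemma aux_seg_mem {d : ℝ} (hd : 0 < d) (M : ℝ) (hM : 0 ≤ M) (z : ℝ × ℝ)
    (hz : z ∈ segment ℝ (d, M) (d, -M)) : z.1 = d ∧ |z.2| ≤ M := by
  obtain ⟨a, b, ha, hb, hab, heq⟩ := hz
  have h1 : a * d + b * d = z.1 := congrArg Prod.fst heq
  have h2 : a * M + b * (-M) = z.2 := congrArg Prod.snd heq
  constructor
  · rw [← h1]; nlinarith
  · rw [abs_le]; constructor <;> nlinarith

/-- a line meeting both segments `[θ_k, θ_{-k}]` and
`[θ_{k+1}, θ_{-(k+1)}]` (`k ≥ 1`) makes an angle `< 3γ` with the `x`-axis. -/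
theorem argDir_lt_of_meets_segments (ε γ : ℝ) (hε : 0 < ε ∧ ε < 1)
    (hγ : 0 < γ ∧ γ < π / 12) (k : ℤ) (hk : 1 ≤ k)
    (p v : ℝ × ℝ) (hv : v ≠ 0)
    (h1 : ∃ t : ℝ, p + t • v ∈ segment ℝ (theta ε γ k) (theta ε γ (-k)))
    (h2 : ∃ t : ℝ, p + t • v ∈ segment ℝ (theta ε γ (k + 1)) (theta ε γ (-(k + 1)))) :
    argDir v < 3 * γ := by
  obtain ⟨hε0, hε1⟩ := hε
  obtain ⟨hγ0, hγ12⟩ := hγ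
  have hπ := Real.pi_pos
  have htan : 0 < Real.tan γ :=
    Real.tan_pos_of_pos_of_lt_pi_div_two hγ0 (by linarith)
  set n := k.natAbs with hn
  have hc : 0 < ε / 2 ^ n := div_pos hε0 (pow_pos two_pos n)
  set c : ℝ := ε / 2 ^ n with hcdef
  have hc2 : ε / 2 ^ (k + 1).natAbs = c / 2 := by
    have : (k + 1).natAbs = n + 1 := by omega
    rw [this, hcdef, pow_succ]; ring
  -- rewrite the four theta points
  have hsk : ((k.sign : ℤ) : ℝ) = 1 := by
    rw [Int.sign_eq_one_iff_pos.mpr (by omega)]; norm_num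
  have hsnk : (((-k).sign : ℤ) : ℝ) = -1 := by
    rw [Int.sign_eq_neg_one_iff_neg.mpr (by omega)]; norm_num
  have hsk1 : (((k + 1).sign : ℤ) : ℝ) = 1 := by
    rw [Int.sign_eq_one_iff_pos.mpr (by omega)]; norm_num
  have hsnk1 : (((-(k + 1)).sign : ℤ) : ℝ) = -1 := by
    rw [Int.sign_eq_neg_one_iff_neg.mpr (by omega)]; norm_num
  have hthk : theta ε γ k = (c, Real.tan γ * c) := by
    simp only [theta, hsk, hcdef]; rw [Prod.mk.injEq]; constructor <;> ring
  have hthnk : theta ε γ (-k) = (c, -(Real.tan γ * c)) := by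
    simp only [theta, hsnk, Int.natAbs_neg, hcdef]
    rw [Prod.mk.injEq]; constructor <;> ring
  have hthk1 : theta ε γ (k + 1) = (c / 2, Real.tan γ * (c / 2)) := by
    simp only [theta, hsk1]
    rw [Prod.mk.injEq]
    constructor
    · exact hc2
    · rw [show (1 : ℝ) * Real.tan γ * ε / 2 ^ (k + 1).natAbs
          = Real.tan γ * (ε / 2 ^ (k + 1).natAbs) by ring, hc2]
  have hthnk1 : theta ε γ (-(k + 1)) = (c / 2, -(Real.tan γ * (c / 2))) := by
    simp only [theta, hsnk1, Int.natAbs_neg]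
    rw [Prod.mk.injEq]
    constructor
    · exact hc2
    · rw [show (-1 : ℝ) * Real.tan γ * ε / 2 ^ (k + 1).natAbs
          = -(Real.tan γ * (ε / 2 ^ (k + 1).natAbs)) by ring, hc2]
  obtain ⟨t1, hA⟩ := h1
  obtain ⟨t2, hB⟩ := h2
  rw [hthk, hthnk] at hA
  rw [hthk1, hthnk1] at hB
  obtain ⟨hA1, hA2⟩ := aux_seg_mem hc _ (by positivity) _ hA
  obtain ⟨hB1, hB2⟩ := aux_seg_mem (by positivity) _ (by positivity) _ hB
  simp only [Prod.fst_add, Prod.snd_add, Prod.smul_fst, Prod.smul_snd, smul_eq_mul] at hA1 hA2 hB1 hB2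
  have hsub1 : (t1 - t2) * v.1 = c / 2 := by linear_combination hA1 - hB1
  have hv1 : v.1 ≠ 0 := by
    intro h; rw [h, mul_zero] at hsub1; linarith
  have ht12 : t1 - t2 ≠ 0 := by
    intro h; rw [h, zero_mul] at hsub1; linarith
  have hsub2 : (t1 - t2) * v.2 = (p + t1 • v).2 - (p + t2 • v).2 := by
    simp only [Prod.snd_add, Prod.smul_snd, smul_eq_mul]; ring
  have hslope : v.2 / v.1 = ((p + t1 • v).2 - (p + t2 • v).2) / (c / 2) := by
    rw [← hsub2, ← hsub1, mul_div_mul_left _ _ ht12]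
  have hnum : |(p + t1 • v).2 - (p + t2 • v).2| ≤ Real.tan γ * c + Real.tan γ * (c / 2) :=
    (abs_sub _ _).trans (add_le_add hA2 hB2)
  have hbound : |v.2 / v.1| ≤ 3 * Real.tan γ := by
    rw [hslope, abs_div, abs_of_pos (by positivity : (0:ℝ) < c / 2),
      div_le_iff₀ (by positivity : (0:ℝ) < c / 2)]
    calc |(p + t1 • v).2 - (p + t2 • v).2| ≤ Real.tan γ * c + Real.tan γ * (c / 2) := hnum
      _ = 3 * Real.tan γ * (c / 2) := by ring
  have hargDir : argDir v = Real.arctan |v.2 / v.1| := by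
    simp [argDir, hv1]
  rw [hargDir]
  calc Real.arctan |v.2 / v.1| ≤ Real.arctan (3 * Real.tan γ) :=
        Real.arctan_strictMono.monotone hbound
    _ < Real.arctan (Real.tan (3 * γ)) :=
        Real.arctan_strictMono (aux_three_tan_lt hγ0 hγ12)
    _ = 3 * γ := Real.arctan_tan (by linarith) (by linarith)

end
end

section
/- Let 0 < ε < 1 and 0 < γ < π/12, and let θ_k = (ε/2^{|k|}, sign(k)·tan(γ)·ε/2^{|k|}) for k = ±1, ±2, …. If R ∈ R_s is a rectangle with 3γ < |s| < π/2 − 3γ and θ_n, θ_{n+1}, θ_{n+2} ∈ R for some n ≥ 1, then θ_{−(n+1)} ∈ R; symmetrically, if θ_{−n}, θ_{−(n+1)}, θ_{−(n+2)} ∈ R, then θ_{n+1} ∈ R. -/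
open MeasureTheory Filter Set Real
open scoped ENNReal

noncomputable section

lemma abs_sin_eq' (s : ℝ) (h : |s| ≤ π) : |Real.sin s| = Real.sin |s| := by
  rcases le_or_gt 0 s with h0|h0
  · rw [abs_of_nonneg h0,
      abs_of_nonneg (Real.sin_nonneg_of_nonneg_of_le_pi h0 (by rwa [abs_of_nonneg h0] at h))]
  · have h2 : 0 ≤ Real.sin (-s) :=
      Real.sin_nonneg_of_nonneg_of_le_pi (by linarith) (by rwa [abs_of_neg h0] at h)
    rw [Real.sin_neg] at h2
    rw [abs_of_neg h0, Real.sin_neg, abs_of_nonpos (by linarith)]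

lemma abs_cos_eq' (s : ℝ) : Real.cos s = Real.cos |s| := by
  rcases abs_cases s with ⟨h,_⟩|⟨h,_⟩ <;> rw [h] <;> simp

lemma htan3' (γ : ℝ) (hγ0 : 0 < γ) (hγ1 : γ < π/12) :
    3 * Real.cos (3*γ) * Real.sin γ ≤ Real.sin (3*γ) * Real.cos γ := by
  have hπ := Real.pi_gt_three
  have hsg : 0 < Real.sin γ := Real.sin_pos_of_pos_of_lt_pi hγ0 (by linarith)
  have hcg : 0 < Real.cos γ := Real.cos_pos_of_mem_Ioo ⟨by linarith, by linarith⟩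
  have h8 : Real.sin (3*γ) * Real.cos γ - 3 * Real.cos (3*γ) * Real.sin γ
      = 8 * Real.sin γ ^ 3 * Real.cos γ := by
    rw [Real.sin_three_mul, Real.cos_three_mul]
    linear_combination (-12 * Real.sin γ * Real.cos γ) * Real.sin_sq_add_cos_sq γ
  nlinarith [pow_pos hsg 3]

lemma keyK (γ s : ℝ) (hγ0 : 0 < γ) (hγ1 : γ < π/12)
    (hs2 : |s| < π/2 - 3*γ) :
    3 * |Real.sin s| * Real.sin γ ≤ Real.cos s * Real.cos γ := by
  have hπ := Real.pi_gt_three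
  have hs0 : 0 ≤ |s| := abs_nonneg s
  have hss := abs_sin_eq' s (by linarith)
  have h1 : Real.sin (3*γ) ≤ Real.cos |s| := by
    rw [← Real.cos_pi_div_two_sub]
    exact Real.cos_le_cos_of_nonneg_of_le_pi hs0 (by linarith) (by linarith)
  have h2 : Real.sin |s| ≤ Real.cos (3*γ) := by
    rw [← Real.sin_pi_div_two_sub]
    exact Real.sin_le_sin_of_le_of_le_pi_div_two (by linarith) (by linarith) (by linarith)
  have hsg : 0 < Real.sin γ := Real.sin_pos_of_pos_of_lt_pi hγ0 (by linarith)
  have hcg : 0 < Real.cos γ := Real.cos_pos_of_mem_Ioo ⟨by linarith, by linarith⟩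
  have htan := htan3' γ hγ0 hγ1
  rw [abs_cos_eq' s, hss]
  calc 3 * Real.sin |s| * Real.sin γ ≤ 3 * Real.cos (3*γ) * Real.sin γ := by nlinarith
    _ ≤ Real.sin (3*γ) * Real.cos γ := htan
    _ ≤ Real.cos |s| * Real.cos γ := by nlinarith

lemma keyK' (γ s : ℝ) (hγ0 : 0 < γ) (hγ1 : γ < π/12)
    (hs1 : 3*γ < |s|) (hs2 : |s| < π/2 - 3*γ) :
    3 * Real.cos s * Real.sin γ ≤ |Real.sin s| * Real.cos γ := by
  have hπ := Real.pi_gt_three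
  have hs0 : 0 ≤ |s| := abs_nonneg s
  have hss := abs_sin_eq' s (by linarith)
  have h1 : Real.sin (3*γ) ≤ Real.sin |s| :=
    Real.sin_le_sin_of_le_of_le_pi_div_two (by linarith) (by linarith) (by linarith)
  have h2 : Real.cos |s| ≤ Real.cos (3*γ) :=
    Real.cos_le_cos_of_nonneg_of_le_pi (by linarith) (by linarith) (by linarith)
  have hsg : 0 < Real.sin γ := Real.sin_pos_of_pos_of_lt_pi hγ0 (by linarith)
  have hcg : 0 < Real.cos γ := Real.cos_pos_of_mem_Ioo ⟨by linarith, by linarith⟩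
  have htan := htan3' γ hγ0 hγ1
  rw [abs_cos_eq' s, hss]
  calc 3 * Real.cos |s| * Real.sin γ ≤ 3 * Real.cos (3*γ) * Real.sin γ := by nlinarith
    _ ≤ Real.sin (3*γ) * Real.cos γ := htan
    _ ≤ Real.sin |s| * Real.cos γ := by nlinarith

lemma mem_rect_iff {s : ℝ} {c : ℝ × ℝ} {a b : ℝ} {p : ℝ × ℝ} :
    p ∈ rect s c a b ↔
      ((p.1 - c.1) * Real.cos s + (p.2 - c.2) * Real.sin s ∈ Set.Ioo 0 a) ∧
      (-(p.1 - c.1) * Real.sin s + (p.2 - c.2) * Real.cos s ∈ Set.Ioo 0 b) := by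
  have hpy := Real.sin_sq_add_cos_sq s
  constructor
  · rintro ⟨q, ⟨hq1, hq2⟩, rfl⟩
    simp only [rot, Prod.fst_add, Prod.snd_add]
    constructor
    · have h : (c.1 + (q.1 * Real.cos s - q.2 * Real.sin s) - c.1) * Real.cos s +
          (c.2 + (q.1 * Real.sin s + q.2 * Real.cos s) - c.2) * Real.sin s = q.1 := by
        linear_combination q.1 * hpy
      rw [h]; exact hq1
    · have h : -(c.1 + (q.1 * Real.cos s - q.2 * Real.sin s) - c.1) * Real.sin s +
          (c.2 + (q.1 * Real.sin s + q.2 * Real.cos s) - c.2) * Real.cos s = q.2 := by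
        linear_combination q.2 * hpy
      rw [h]; exact hq2
  · rintro ⟨h1, h2⟩
    refine ⟨((p.1 - c.1) * Real.cos s + (p.2 - c.2) * Real.sin s,
      -(p.1 - c.1) * Real.sin s + (p.2 - c.2) * Real.cos s), ⟨h1, h2⟩, ?_⟩
    simp only [rot, Prod.ext_iff, Prod.fst_add, Prod.snd_add]
    constructor
    · linear_combination (p.1 - c.1) * hpy
    · linear_combination (p.2 - c.2) * hpy

set_option maxHeartbeats 1000000 in
/-- if `R` has slope `s` with `3γ < |s| < π/2 - 3γ`, then
`θ_n, θ_{n+1}, θ_{n+2} ∈ R` implies `θ_{-(n+1)} ∈ R`, and symmetrically. -/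
theorem theta_mem_of_three_mem (ε γ : ℝ) (hε : 0 < ε ∧ ε < 1) (hγ : 0 < γ ∧ γ < π / 12)
    (s : ℝ) (hs : 3 * γ < |s| ∧ |s| < π / 2 - 3 * γ)
    (R : Set (ℝ × ℝ)) (hR : IsRect s R) (n : ℤ) (hn : 1 ≤ n) :
    (theta ε γ n ∈ R → theta ε γ (n + 1) ∈ R → theta ε γ (n + 2) ∈ R →
      theta ε γ (-(n + 1)) ∈ R) ∧
    (theta ε γ (-n) ∈ R → theta ε γ (-(n + 1)) ∈ R → theta ε γ (-(n + 2)) ∈ R →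
      theta ε γ (n + 1) ∈ R) := by
  obtain ⟨hε0, hε1⟩ := hε
  obtain ⟨hγ0, hγ1⟩ := hγ
  obtain ⟨hsl, hsu⟩ := hs
  obtain ⟨c, a, b, ha, hb, -, -, rfl⟩ := hR
  have hπ := Real.pi_gt_three
  have hn0 : (0:ℤ) < n := hn
  set t := Real.tan γ with htdef
  set r : ℝ := ε / 2 ^ n.natAbs with hrdef
  have hr : (0:ℝ) < r := div_pos hε0 (pow_pos two_pos _)
  -- basic trig facts
  have hsγ : 0 < Real.sin γ := Real.sin_pos_of_pos_of_lt_pi hγ0 (by linarith)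
  have hcγ : 0 < Real.cos γ := Real.cos_pos_of_mem_Ioo ⟨by linarith, by linarith⟩
  have ht0 : 0 < t := by
    rw [htdef, Real.tan_eq_sin_div_cos]; exact div_pos hsγ hcγ
  have ht : t * Real.cos γ = Real.sin γ := by
    rw [htdef, Real.tan_eq_sin_div_cos]; field_simp
  have hcos : 0 < Real.cos s := by
    rcases abs_lt.1 hsu with ⟨hh1, hh2⟩
    exact Real.cos_pos_of_mem_Ioo ⟨by linarith, by linarith⟩
  have hKa := keyK γ s hγ0 hγ1 hsu
  have hKb := keyK' γ s hγ0 hγ1 hsl hsu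
  have ht2 : 3*(t*Real.sin s)*Real.cos γ = 3*Real.sin s*Real.sin γ := by
    linear_combination 3*Real.sin s * ht
  have ht3 : 3*(t*Real.cos s)*Real.cos γ = 3*Real.cos s*Real.sin γ := by
    linear_combination 3*Real.cos s * ht
  have habs1 : Real.sin s ≤ |Real.sin s| := le_abs_self _
  have habs2 : -|Real.sin s| ≤ Real.sin s := neg_abs_le _
  have hK1 : 3*(t*Real.sin s) ≤ Real.cos s := by
    have h : 0 ≤ (Real.cos s - 3*(t*Real.sin s)) * Real.cos γ := by
      nlinarith [mul_nonneg (sub_nonneg.2 habs1) hsγ.le]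
    nlinarith
  have hK2 : -(Real.cos s) ≤ 3*(t*Real.sin s) := by
    have h : 0 ≤ (Real.cos s + 3*(t*Real.sin s)) * Real.cos γ := by
      nlinarith [mul_nonneg (sub_nonneg.2 habs2) hsγ.le]
    nlinarith
  have hK3 : 3*(t*Real.cos s) ≤ |Real.sin s| := by
    have h : 0 ≤ (|Real.sin s| - 3*(t*Real.cos s)) * Real.cos γ := by nlinarith
    nlinarith
  -- coordinates of the theta points
  have key : ∀ (j : ℤ) (k : ℕ), 0 < j → j.natAbs = k →
      theta ε γ j = (ε/2^k, t*(ε/2^k)) ∧ theta ε γ (-j) = (ε/2^k, -(t*(ε/2^k))) := by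
    intro j k hj hk
    have hsj : j.sign = 1 := Int.sign_eq_one_iff_pos.2 hj
    have hsj' : (-j).sign = -1 := by rw [Int.sign_neg, hsj]
    have hk' : (-j).natAbs = k := by omega
    constructor <;> · simp only [theta, hsj, hsj', hk, hk', Int.cast_one, Int.cast_neg]
                      exact Prod.ext rfl (by ring)
  obtain ⟨e1, e5⟩ := key n n.natAbs hn0 rfl
  obtain ⟨e2, e4⟩ := key (n+1) (n.natAbs+1) (by omega) (by omega)
  obtain ⟨e3, e6⟩ := key (n+2) (n.natAbs+2) (by omega) (by omega)
  have hp1 : ε/2^(n.natAbs+1) = r/2 := by rw [hrdef, pow_succ]; ring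
  have hp2 : ε/2^(n.natAbs+2) = r/4 := by rw [hrdef, pow_add]; norm_num; ring
  rw [hp1] at e2 e4
  rw [hp2] at e3 e6
  rw [← hrdef] at e1 e5
  constructor
  · intro h1 h2 h3
    rw [e1, mem_rect_iff] at h1
    rw [e2, mem_rect_iff] at h2
    rw [e3, mem_rect_iff] at h3
    rw [e4, mem_rect_iff]
    simp only [Set.mem_Ioo] at h1 h2 h3 ⊢
    obtain ⟨⟨h1a, h1b⟩, ⟨h1c, h1d⟩⟩ := h1
    obtain ⟨⟨h2a, h2b⟩, ⟨h2c, h2d⟩⟩ := h2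
    obtain ⟨⟨h3a, h3b⟩, ⟨h3c, h3d⟩⟩ := h3
    have hu1 : 0 ≤ r * (Real.cos s - 3*(t*Real.sin s)) :=
      mul_nonneg hr.le (by linarith)
    have hu2 : 0 ≤ r * (Real.cos s + 3*(t*Real.sin s)) :=
      mul_nonneg hr.le (by linarith)
    rcases abs_cases (Real.sin s) with ⟨hss, hs0⟩|⟨hss, hs0⟩ <;> rw [hss] at hK3
    · have hv1 : 0 ≤ r * (Real.sin s - 3*(t*Real.cos s)) := mul_nonneg hr.le (by linarith)
      have hv2 : 0 ≤ r * (Real.sin s + 3*(t*Real.cos s)) :=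
        mul_nonneg hr.le (by linarith [mul_pos ht0 hcos])
      exact ⟨⟨by linarith [h3a, hu1], by linarith [h1b, hu2]⟩,
             by linarith [h1c, hv1], by linarith [h3d, hv2]⟩
    · have hv1 : 0 ≤ r * (-(Real.sin s) - 3*(t*Real.cos s)) := mul_nonneg hr.le (by linarith)
      have hv2 : 0 ≤ r * (-(Real.sin s) + 3*(t*Real.cos s)) :=
        mul_nonneg hr.le (by linarith [mul_pos ht0 hcos])
      exact ⟨⟨by linarith [h3a, hu1], by linarith [h1b, hu2]⟩,
             by linarith [h3c, hv1], by linarith [h1d, hv2]⟩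
  · intro h1 h2 h3
    rw [e5, mem_rect_iff] at h1
    rw [e4, mem_rect_iff] at h2
    rw [e6, mem_rect_iff] at h3
    rw [e2, mem_rect_iff]
    simp only [Set.mem_Ioo] at h1 h2 h3 ⊢
    obtain ⟨⟨h1a, h1b⟩, ⟨h1c, h1d⟩⟩ := h1
    obtain ⟨⟨h2a, h2b⟩, ⟨h2c, h2d⟩⟩ := h2
    obtain ⟨⟨h3a, h3b⟩, ⟨h3c, h3d⟩⟩ := h3
    have hu1 : 0 ≤ r * (Real.cos s - 3*(t*Real.sin s)) :=
      mul_nonneg hr.le (by linarith)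
    have hu2 : 0 ≤ r * (Real.cos s + 3*(t*Real.sin s)) :=
      mul_nonneg hr.le (by linarith)
    rcases abs_cases (Real.sin s) with ⟨hss, hs0⟩|⟨hss, hs0⟩ <;> rw [hss] at hK3
    · have hv1 : 0 ≤ r * (Real.sin s - 3*(t*Real.cos s)) := mul_nonneg hr.le (by linarith)
      have hv2 : 0 ≤ r * (Real.sin s + 3*(t*Real.cos s)) :=
        mul_nonneg hr.le (by linarith [mul_pos ht0 hcos])
      exact ⟨⟨by linarith [h3a, hu1], by linarith [h1b, hu2]⟩,
             by linarith [h1c, hv1], by linarith [h3d, hv2]⟩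
    · have hv1 : 0 ≤ r * (-(Real.sin s) - 3*(t*Real.cos s)) := mul_nonneg hr.le (by linarith)
      have hv2 : 0 ≤ r * (-(Real.sin s) + 3*(t*Real.cos s)) :=
        mul_nonneg hr.le (by linarith [mul_pos ht0 hcos])
      exact ⟨⟨by linarith [h3a, hu1], by linarith [h1b, hu2]⟩,
             by linarith [h3c, hv1], by linarith [h1d, hv2]⟩

end
end

section
/- Every open interval I = (α, β) ⊆ ℝ can be split into countably many pairwise disjoint half-open intervals I_i = [α_i, β_i) whose union is I, such that |I_i| ≤ π/12 for every i, 3I_i ⊆ I for every i, and Σ_i 𝟙_{3I_i}(x) ≤ 8 for every x ∈ ℝ. -/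
open MeasureTheory Filter Set Real
open scoped ENNReal

noncomputable section

/-- The interval with the same center as `[a, b)` and three times its length. -/
def threeIco (a b : ℝ) : Set ℝ :=
  Set.Ico ((a + b) / 2 - 3 * (b - a) / 2) ((a + b) / 2 + 3 * (b - a) / 2)

namespace IntervalSplit

/-- cap length -/
def cap (α β : ℝ) : ℝ := min (π / 12) ((β - α) / 8)

/-- right-half sequence starting at the midpoint -/
def Y (α β : ℝ) : ℕ → ℝ
  | 0 => (α + β) / 2
  | n + 1 => Y α β n + min (cap α β) ((β - Y α β n) / 4)

/-- two-sided chain of partition points -/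
def X (α β : ℝ) (k : ℤ) : ℝ :=
  if 0 ≤ k then Y α β k.toNat else α + β - Y α β (-k).toNat

variable {α β : ℝ}

lemma cap_pos (h : α < β) : 0 < cap α β :=
  lt_min (by positivity) (by linarith)

lemma cap_le_pi : cap α β ≤ π / 12 := min_le_left _ _

lemma cap_le : cap α β ≤ (β - α) / 8 := min_le_right _ _

lemma Y_bounds (h : α < β) : ∀ n, (α + β) / 2 ≤ Y α β n ∧ Y α β n < β := by
  intro n
  induction n with
  | zero => exact ⟨le_refl _, by simp [Y]; linarith⟩
  | succ n ih =>
    have h1 : 0 < min (cap α β) ((β - Y α β n) / 4) :=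
      lt_min (cap_pos h) (by linarith [ih.2])
    have h2 : min (cap α β) ((β - Y α β n) / 4) ≤ (β - Y α β n) / 4 := min_le_right _ _
    constructor
    · simp only [Y]; linarith [ih.1]
    · simp only [Y]; linarith [ih.2]

lemma X_of_nonneg {k : ℤ} (hk : 0 ≤ k) : X α β k = Y α β k.toNat := if_pos hk

lemma X_of_nonpos (h : α < β) {k : ℤ} (hk : k ≤ 0) :
    X α β k = α + β - Y α β (-k).toNat := by
  rcases eq_or_lt_of_le hk with rfl | hk'
  · simp [X, Y]; ring
  · exact if_neg (by omega)

/-- length of interval `k` -/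
def len (α β : ℝ) (k : ℤ) : ℝ := X α β (k + 1) - X α β k

lemma len_of_nonneg (h : α < β) {k : ℤ} (hk : 0 ≤ k) :
    len α β k = min (cap α β) ((β - X α β k) / 4) := by
  have h1 : X α β k = Y α β k.toNat := X_of_nonneg hk
  have h2 : X α β (k + 1) = Y α β (k.toNat + 1) := by
    rw [X_of_nonneg (by omega)]; congr 1; omega
  rw [len, h1, h2]; simp [Y]

lemma len_of_neg (h : α < β) {k : ℤ} (hk : k < 0) :
    len α β k = min (cap α β) ((X α β (k + 1) - α) / 4) := by
  have h1 : X α β k = α + β - Y α β ((-(k+1)).toNat + 1) := by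
    rw [X_of_nonpos h (by omega)]; congr 2; omega
  have h2 : X α β (k + 1) = α + β - Y α β (-(k+1)).toNat :=
    X_of_nonpos h (by omega)
  rw [len, h1, h2]
  simp only [Y]
  have : β - Y α β (-(k+1)).toNat = (α + β - Y α β (-(k+1)).toNat) - α := by ring
  rw [this]; ring_nf

lemma X_bounds (h : α < β) (k : ℤ) : α < X α β k ∧ X α β k < β := by
  rcases le_or_gt 0 k with hk | hk
  · rw [X_of_nonneg hk]
    exact ⟨by linarith [(Y_bounds h k.toNat).1], (Y_bounds h k.toNat).2⟩
  · rw [X_of_nonpos h hk.le]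
    exact ⟨by linarith [(Y_bounds h (-k).toNat).2],
      by linarith [(Y_bounds h (-k).toNat).1]⟩

lemma X_le_mid (h : α < β) {k : ℤ} (hk : k ≤ 0) : X α β k ≤ (α + β) / 2 := by
  rw [X_of_nonpos h hk]; linarith [(Y_bounds h (-k).toNat).1]

lemma mid_le_X (h : α < β) {k : ℤ} (hk : 0 ≤ k) : (α + β) / 2 ≤ X α β k := by
  rw [X_of_nonneg hk]; exact (Y_bounds h k.toNat).1

lemma len_pos (h : α < β) (k : ℤ) : 0 < len α β k := by
  rcases le_or_gt 0 k with hk | hk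
  · rw [len_of_nonneg h hk]
    exact lt_min (cap_pos h) (by linarith [(X_bounds h k).2])
  · rw [len_of_neg h hk]
    exact lt_min (cap_pos h) (by linarith [(X_bounds h (k+1)).1])

lemma len_le_cap (h : α < β) (k : ℤ) : len α β k ≤ cap α β := by
  rcases le_or_gt 0 k with hk | hk
  · rw [len_of_nonneg h hk]; exact min_le_left _ _
  · rw [len_of_neg h hk]; exact min_le_left _ _

lemma X_strictMono (h : α < β) : StrictMono (X α β) :=
  strictMono_int_of_lt_succ fun k => by
    have := len_pos h k; rw [len] at this; linarith

lemma three_bounds (h : α < β) (k : ℤ) :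
    α < X α β k - len α β k ∧ X α β (k + 1) + len α β k < β := by
  have hX := X_bounds h k
  have hX1 := X_bounds h (k + 1)
  have hsucc : X α β (k + 1) = X α β k + len α β k := by rw [len]; ring
  rcases le_or_gt 0 k with hk | hk
  · have hlen : len α β k ≤ (β - X α β k) / 4 := by
      rw [len_of_nonneg h hk]; exact min_le_right _ _
    have hcap : len α β k ≤ (β - α) / 8 := (len_le_cap h k).trans cap_le
    have hmid := mid_le_X h hk
    constructor
    · linarith
    · linarith
  · have hlen : len α β k ≤ (X α β (k + 1) - α) / 4 := by
      rw [len_of_neg h hk]; exact min_le_right _ _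
    have hcap : len α β k ≤ (β - α) / 8 := (len_le_cap h k).trans cap_le
    have hmid := X_le_mid h (show k + 1 ≤ 0 by omega)
    constructor
    · linarith
    · linarith

lemma ratio (h : α < β) (k : ℤ) :
    3 / 4 * len α β k ≤ len α β (k + 1) ∧ 3 / 4 * len α β (k + 1) ≤ len α β k := by
  have hc : 0 < cap α β := cap_pos h
  have hp := len_pos h k
  have hp1 := len_pos h (k + 1)
  rcases le_or_gt 0 k with hk | hk
  · -- both right-type
    have e1 := len_of_nonneg h hk
    have e2 := len_of_nonneg h (show (0:ℤ) ≤ k + 1 by omega)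
    have hd : β - X α β (k + 1) = (β - X α β k) - len α β k := by rw [len]; ring
    have hle : len α β k ≤ (β - X α β k) / 4 := by rw [e1]; exact min_le_right _ _
    have hcapk : len α β k ≤ cap α β := by rw [e1]; exact min_le_left _ _
    constructor
    · rw [e2]
      refine le_min (by linarith) ?_
      linarith
    · have : len α β (k + 1) ≤ len α β k := by
        rw [e1, e2]
        exact min_le_min le_rfl (by linarith)
      linarith
  · rcases lt_or_ge (k + 1) 0 with hk1 | hk1
    · -- both left-type
      have e1 := len_of_neg h hk
      have e2 := len_of_neg h hk1
      have he : X α β (k + 2) - α = (X α β (k + 1) - α) + len α β (k + 1) := by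
        have : X α β (k + 2) = X α β ((k + 1) + 1) := by congr 1; omega
        rw [this, show X α β ((k+1)+1) = X α β (k+1) + len α β (k+1) by rw [len]; ring]
        ring
      have e2' : len α β (k + 1) = min (cap α β) ((X α β (k + 2) - α) / 4) := by
        rw [show k + 2 = (k + 1) + 1 by omega] at he ⊢
        exact e2
      have hle : len α β (k + 1) ≤ (X α β (k + 2) - α) / 4 := by
        rw [e2']; exact min_le_right _ _
      have hcapk : len α β (k + 1) ≤ cap α β := len_le_cap h (k + 1)
      constructor
      · have : len α β k ≤ len α β (k + 1) := by
          rw [e1, e2']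
          exact min_le_min le_rfl (by linarith)
        linarith
      · rw [e1]
        refine le_min (by linarith) ?_
        linarith
    · -- k = -1
      have hk' : k = -1 := by omega
      subst hk'
      have hidx : (-1 : ℤ) + 1 = 0 := by norm_num
      rw [hidx]
      have e1 := len_of_neg h (show (-1:ℤ) < 0 by norm_num)
      rw [hidx] at e1
      have e2 : len α β 0 = min (cap α β) ((β - X α β 0) / 4) :=
        len_of_nonneg h le_rfl
      have hX0 : X α β 0 = (α + β) / 2 := by
        rw [X_of_nonneg le_rfl]; simp [Y]
      have heq : len α β (-1) = len α β 0 := by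
        rw [e1, e2, hX0]; congr 1; ring
      have h0 := len_pos h (0 : ℤ)
      constructor <;> rw [heq] <;> linarith

lemma sep (h : α < β) {k j : ℤ} (hkj : k + 5 ≤ j) :
    X α β k + 2 * len α β k ≤ X α β j - len α β j := by
  have r1 := (ratio h k).1
  have r2 := (ratio h (k + 1)).1
  rw [show k + 1 + 1 = k + 2 by omega] at r2
  have r3 := (ratio h (j - 1)).2
  have r4 := (ratio h (j - 2)).2
  rw [show j - 1 + 1 = j by omega] at r3
  rw [show j - 2 + 1 = j - 1 by omega] at r4
  have s1 : X α β (k + 1) = X α β k + len α β k := by rw [len]; ring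
  have s2 : X α β (k + 2) = X α β (k + 1) + len α β (k + 1) := by
    rw [show k + 2 = (k + 1) + 1 by omega, len]; ring
  have s3 : X α β (k + 3) = X α β (k + 2) + len α β (k + 2) := by
    rw [show k + 3 = (k + 2) + 1 by omega, len]; ring
  have s4 : X α β (j - 1) = X α β (j - 2) + len α β (j - 2) := by
    rw [show j - 1 = (j - 2) + 1 by omega, len]; ring
  have s5 : X α β j = X α β (j - 1) + len α β (j - 1) := by
    have hj : X α β j = X α β ((j - 1) + 1) := by congr 1; omega
    rw [hj, len]; ring
  have hmono : X α β (k + 3) ≤ X α β (j - 2) :=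
    (X_strictMono h).monotone (by omega)
  have hk2 := (ratio h (k + 1)).1
  have hp := len_pos h k
  have hpj := len_pos h j
  have hpk1 := len_pos h (k + 1)
  have hpj1 := len_pos h (j - 1)
  linarith [len_pos h (k + 2), len_pos h (j - 2)]

lemma reach (h : α < β) {t : ℝ} (ht : t < β) : ∃ n, t < Y α β n := by
  by_contra hcon
  push_neg at hcon
  set ε := min (cap α β) ((β - t) / 4) with hε
  have hεpos : 0 < ε := lt_min (cap_pos h) (by linarith)
  have key : ∀ n : ℕ, (α + β) / 2 + n * ε ≤ Y α β n := by
    intro n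
    induction n with
    | zero => simp [Y]
    | succ n ih =>
      have h1 : ε ≤ min (cap α β) ((β - Y α β n) / 4) :=
        min_le_min le_rfl (by linarith [hcon n])
      have : Y α β (n + 1) = Y α β n + min (cap α β) ((β - Y α β n) / 4) := rfl
      push_cast
      rw [this]
      push_cast at ih
      linarith
  obtain ⟨n, hn⟩ := exists_nat_gt ((t - (α + β) / 2) / ε)
  have : (t - (α + β) / 2) / ε * ε < n * ε := by
    exact mul_lt_mul_of_pos_right hn hεpos
  rw [div_mul_cancel₀ _ hεpos.ne'] at this
  linarith [key n, hcon n]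

lemma cover (h : α < β) {t : ℝ} (ht : t ∈ Ioo α β) :
    ∃ k : ℤ, X α β k ≤ t ∧ t < X α β (k + 1) := by
  classical
  obtain ⟨n₁, hn₁⟩ := reach h ht.2
  obtain ⟨n₂, hn₂⟩ := reach h (show α + β - t < β by linarith [ht.1])
  have hub : ∀ z : ℤ, X α β z ≤ t → z ≤ n₁ := by
    intro z hz
    by_contra hcon
    push_neg at hcon
    have : X α β n₁ < X α β z := X_strictMono h (by exact_mod_cast hcon)
    rw [X_of_nonneg (by positivity)] at this
    simp only [Int.toNat_natCast] at this
    linarith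
  have hinh : X α β (-(n₂ : ℤ)) ≤ t := by
    rw [X_of_nonpos h (by omega)]
    have : (-(-(n₂:ℤ))).toNat = n₂ := by omega
    rw [this]
    linarith
  obtain ⟨k, hk, hmax⟩ := Int.exists_greatest_of_bdd ⟨n₁, hub⟩ ⟨-(n₂:ℤ), hinh⟩
  refine ⟨k, hk, ?_⟩
  by_contra hcon
  push_neg at hcon
  have := hmax (k + 1) hcon
  omega

end IntervalSplit

/-- any open interval `(α, β)` splits into countably many pairwise
disjoint half-open intervals `I_i = [a_i, b_i)` with `|I_i| ≤ π/12`, `3I_i ⊆ (α, β)`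
and every point covered by at most `8` of the `3I_i`. -/
theorem exists_interval_splitting (α β : ℝ) (h : α < β) :
    ∃ a b : ℕ → ℝ, (∀ i, a i < b i) ∧
      Pairwise (Function.onFun Disjoint (fun i => Set.Ico (a i) (b i))) ∧
      (⋃ i, Set.Ico (a i) (b i)) = Set.Ioo α β ∧
      (∀ i, b i - a i ≤ π / 12) ∧
      (∀ i, threeIco (a i) (b i) ⊆ Set.Ioo α β) ∧
      (∀ x : ℝ, {i : ℕ | x ∈ threeIco (a i) (b i)}.Finite ∧
        {i : ℕ | x ∈ threeIco (a i) (b i)}.ncard ≤ 8) := by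
  classical
  open IntervalSplit in
  set e : ℕ ≃ ℤ := (Denumerable.eqv ℤ).symm with he
  refine ⟨fun i => X α β (e i), fun i => X α β (e i + 1), ?_, ?_, ?_, ?_, ?_, ?_⟩
  · intro i
    exact X_strictMono h (lt_add_one _)
  · have key : ∀ m n : ℤ, m < n →
        Disjoint (Set.Ico (X α β m) (X α β (m+1))) (Set.Ico (X α β n) (X α β (n+1))) := by
      intro m n hmn
      apply Set.disjoint_left.mpr
      intro t ht1 ht2
      have hmn' : X α β (m+1) ≤ X α β n := (X_strictMono h).monotone (by omega)
      exact absurd (ht1.2.trans_le (hmn'.trans ht2.1)) (lt_irrefl t)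
    intro i j hij
    have hne : e i ≠ e j := fun hc => hij (e.injective hc)
    rcases hne.lt_or_gt with hlt | hlt
    · exact key _ _ hlt
    · exact (key _ _ hlt).symm
  · have h1 : (⋃ i : ℕ, Set.Ico (X α β (e i)) (X α β (e i + 1)))
        = ⋃ k : ℤ, Set.Ico (X α β k) (X α β (k + 1)) :=
      e.surjective.iUnion_comp (fun k => Set.Ico (X α β k) (X α β (k+1)))
    rw [h1]
    ext t
    simp only [Set.mem_iUnion, Set.mem_Ico, Set.mem_Ioo]
    constructor
    · rintro ⟨k, h1, h2⟩
      exact ⟨lt_of_lt_of_le (X_bounds h k).1 h1, h2.trans (X_bounds h (k+1)).2⟩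
    · intro ht
      obtain ⟨k, hk1, hk2⟩ := cover h (Set.mem_Ioo.mpr ht)
      exact ⟨k, hk1, hk2⟩
  · intro i
    have h1 := len_le_cap h (e i)
    have h2 : cap α β ≤ π / 12 := cap_le_pi
    rw [len] at h1
    linarith
  · intro i
    obtain ⟨h1, h2⟩ := three_bounds h (e i)
    intro t ht
    simp only [threeIco, Set.mem_Ico] at ht
    have hlen : X α β (e i + 1) = X α β (e i) + len α β (e i) := by rw [len]; ring
    rw [Set.mem_Ioo]
    exact ⟨by linarith [ht.1], by linarith [ht.2]⟩
  · intro t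
    set T : Set ℤ := {k | t ∈ threeIco (X α β k) (X α β (k+1))} with hT
    have hmem : ∀ k, t ∈ threeIco (X α β k) (X α β (k+1)) ↔
        X α β k - len α β k ≤ t ∧ t < X α β (k+1) + len α β k := by
      intro k
      have hlen : X α β (k + 1) = X α β k + len α β k := by rw [len]; ring
      simp only [threeIco, Set.mem_Ico]
      constructor <;> intro hh <;>
        exact ⟨by linarith [hh.1, hh.2], by linarith [hh.1, hh.2]⟩
    have hgap : ∀ k ∈ T, ∀ j ∈ T, k ≤ j → j ≤ k + 4 := by
      intro k hk j hj hkj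
      by_contra hc
      push_neg at hc
      have h5 : k + 5 ≤ j := by omega
      have hs := sep h h5
      have h1 := (hmem k).1 hk
      have h2 := (hmem j).1 hj
      have hlenk : X α β (k + 1) = X α β k + len α β k := by rw [len]; ring
      linarith [h1.2, h2.1]
    have hSeq : {i : ℕ | t ∈ threeIco (X α β (e i)) (X α β (e i + 1))} = ⇑e ⁻¹' T := rfl
    by_cases hne : T.Nonempty
    · obtain ⟨k₀, hk₀⟩ := hne
      have hbdd : ∀ z : ℤ, z ∈ T → k₀ - 4 ≤ z := by
        intro z hz
        rcases le_total z k₀ with hle | hle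
        · have := hgap z hz k₀ hk₀ hle; omega
        · omega
      obtain ⟨k₁, hk₁T, hk₁min⟩ :=
        Int.exists_least_of_bdd (P := fun z => z ∈ T) ⟨k₀ - 4, hbdd⟩ ⟨k₀, hk₀⟩
      have hsub : T ⊆ Set.Icc k₁ (k₁ + 4) := fun z hz =>
        ⟨hk₁min z hz, hgap k₁ hk₁T z hz (hk₁min z hz)⟩
      have hTfin : T.Finite := (Set.finite_Icc _ _).subset hsub
      have hfin : (⇑e ⁻¹' T).Finite := hTfin.preimage e.injective.injOn
      constructor
      · exact hfin
      · have hcard : (⇑e ⁻¹' T).ncard = T.ncard := by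
          rw [← Set.image_preimage_eq T e.surjective,
            Set.ncard_image_of_injective _ e.injective,
            Set.preimage_image_eq _ e.injective]
        have h5 : T.ncard ≤ (Set.Icc k₁ (k₁+4)).ncard :=
          Set.ncard_le_ncard hsub (Set.finite_Icc _ _)
        have h6 : (Set.Icc k₁ (k₁+4)).ncard = 5 := by
          rw [← Finset.coe_Icc, Set.ncard_coe_finset, Int.card_Icc]
          omega
        calc ({i : ℕ | t ∈ threeIco (X α β (e i)) (X α β (e i + 1))}).ncard
            = (⇑e ⁻¹' T).ncard := by rw [hSeq]
          _ = T.ncard := hcard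
          _ ≤ 5 := h6 ▸ h5
          _ ≤ 8 := by norm_num
    · rw [Set.not_nonempty_iff_eq_empty] at hne
      have hemp : {i : ℕ | t ∈ threeIco (X α β (e i)) (X α β (e i + 1))} = ∅ := by
        rw [hSeq, hne, Set.preimage_empty]
      rw [hemp]
      exact ⟨Set.finite_empty, by simp⟩

end
end

section
/- For any 0 < δ < 1/10, the set A = {(x₁,x₂) ∈ ℝ² : x₁x₂ ≤ δ/4, δ ≤ x₁ ≤ 1/4, δ ≤ x₂ ≤ 1/4} satisfies rot_s A ⊆ B(1/2) for every s ∈ [−π/4, π/4), and its planar Lebesgue measure equals ∫_δ^{1/4} (δ/(4t)) dt − δ(1/4 − δ), which is strictly greater than (δ/4)·ln(1/(12δ)). -/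
open MeasureTheory Filter Set Real
open scoped ENNReal

noncomputable section

/-! Rotations preserve `x₁² + x₂²`, and `A ⊆ [0, 1/4]²`, so `rot_s A ⊆ B(1/2)`. Since `δ/4 = δ · 1/4`,
the constraint `x₂ ≤ 1/4` is implied by the others, and `A` is the region between the graphs of
`δ` and `δ/(4x₁)` over `[δ, 1/4]`; its area is `(δ/4) log(1/(4δ)) - δ(1/4 - δ)`. The lower bound
follows from `log(1/(4δ)) = log 3 + log(1/(12δ))` and `log 3 > 1`. -/

section RegionBetween

variable {α : Type*} [MeasurableSpace α] {μ : Measure α} {f g : α → ℝ} {s : Set α}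

theorem volume_region_between_cc_eq_lintegral (hf : Measurable f) (hg : Measurable g)
    (hs : MeasurableSet s) :
    μ.prod volume {p : α × ℝ | p.1 ∈ s ∧ p.2 ∈ Icc (f p.1) (g p.1)} =
      ∫⁻ y in s, ENNReal.ofReal (g y - f y) ∂μ := by
  rw [Measure.prod_apply (measurableSet_region_between_cc hf hg hs), ← lintegral_indicator hs]
  congr 1 with x
  by_cases hx : x ∈ s
  · rw [indicator_of_mem hx, ← Real.volume_Icc]
    congr 1 with y
    simp [hx]
  · simp [hx]

theorem toReal_volume_region_between_cc_eq_integral (hf : Measurable f) (hg : Measurable g)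
    (hs : MeasurableSet s) (f_int : IntegrableOn f s μ) (g_int : IntegrableOn g s μ)
    (hfg : ∀ x ∈ s, f x ≤ g x) :
    (μ.prod volume {p : α × ℝ | p.1 ∈ s ∧ p.2 ∈ Icc (f p.1) (g p.1)}).toReal =
      ∫ y in s, (g y - f y) ∂μ := by
  have hnonneg : 0 ≤ᵐ[μ.restrict s] fun y => g y - f y :=
    (ae_restrict_iff' hs).2 (.of_forall fun x hx => sub_nonneg.2 (hfg x hx))
  have hint : IntegrableOn (fun y => g y - f y) s μ := g_int.sub f_int
  rw [volume_region_between_cc_eq_lintegral hf hg hs,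
    ← ofReal_integral_eq_lintegral_ofReal hint hnonneg,
    ENNReal.toReal_ofReal (integral_nonneg_of_ae hnonneg)]

end RegionBetween

theorem rot_fst_sq_add_rot_snd_sq (s : ℝ) (p : ℝ × ℝ) :
    (rot s p).1 ^ 2 + (rot s p).2 ^ 2 = p.1 ^ 2 + p.2 ^ 2 := by
  simp only [rot]
  linear_combination (p.1 ^ 2 + p.2 ^ 2) * Real.sin_sq_add_cos_sq s

theorem rot_mem_euclBall_iff (s r : ℝ) (p : ℝ × ℝ) : rot s p ∈ euclBall r ↔ p ∈ euclBall r := by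
  simp only [euclBall, mem_ofPred_eq, rot_fst_sq_add_rot_snd_sq]

theorem rot_image_subset_euclBall {A : Set (ℝ × ℝ)} {r : ℝ} (s : ℝ) (h : A ⊆ euclBall r) :
    rot s '' A ⊆ euclBall r := by
  rintro _ ⟨p, hp, rfl⟩
  exact (rot_mem_euclBall_iff s r p).2 (h hp)

theorem mem_euclBall_of_abs_le {p : ℝ × ℝ} {r : ℝ} (hr : 0 ≤ r) (h₁ : |p.1| ≤ r / 2)
    (h₂ : |p.2| ≤ r / 2) : p ∈ euclBall r := by
  refine Real.sqrt_le_iff.2 ⟨hr, ?_⟩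
  rw [← sq_abs p.1, ← sq_abs p.2]
  nlinarith [abs_nonneg p.1, abs_nonneg p.2]

theorem integral_const_div_of_pos {a b : ℝ} (c : ℝ) (ha : 0 < a) (hb : 0 < b) :
    ∫ x in a..b, c / x = c * Real.log (b / a) := by
  simp_rw [div_eq_mul_inv c]
  rw [intervalIntegral.integral_const_mul, integral_inv_of_pos ha hb]

theorem setOf_mul_le_mul_eq_region_between {a b : ℝ} (ha : 0 < a) :
    {x : ℝ × ℝ | x.1 * x.2 ≤ a * b ∧ a ≤ x.1 ∧ x.1 ≤ b ∧ a ≤ x.2 ∧ x.2 ≤ b} =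
      {p : ℝ × ℝ | p.1 ∈ Icc a b ∧ p.2 ∈ Icc a (a * b / p.1)} := by
  ext ⟨x, y⟩
  simp only [mem_ofPred_eq, mem_Icc]
  constructor
  · rintro ⟨hxy, hx, hxb, hy, -⟩
    exact ⟨⟨hx, hxb⟩, hy, (le_div_iff₀' (ha.trans_le hx)).2 hxy⟩
  · rintro ⟨⟨hx, hxb⟩, hy, hyx⟩
    have hxy := (le_div_iff₀' (ha.trans_le hx)).1 hyx
    exact ⟨hxy, hx, hxb, hy, by nlinarith⟩

theorem toReal_volume_setOf_mul_le_mul {a b : ℝ} (ha : 0 < a) (hab : a ≤ b) :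
    (volume {x : ℝ × ℝ | x.1 * x.2 ≤ a * b ∧ a ≤ x.1 ∧ x.1 ≤ b ∧ a ≤ x.2 ∧ x.2 ≤ b}).toReal =
      a * b * Real.log (b / a) - a * (b - a) := by
  have hpos : ∀ x ∈ Icc a b, 0 < x := fun x hx => ha.trans_le hx.1
  have hcont : ContinuousOn (fun x : ℝ => a * b / x) (Icc a b) :=
    continuousOn_const.div continuousOn_id fun x hx => (hpos x hx).ne'
  have hle : ∀ x ∈ Icc a b, a ≤ a * b / x := fun x hx =>
    (le_div_iff₀ (hpos x hx)).2 (by nlinarith [hx.2])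
  rw [setOf_mul_le_mul_eq_region_between ha, Measure.volume_eq_prod,
    toReal_volume_region_between_cc_eq_integral measurable_const (by fun_prop) measurableSet_Icc
      (continuousOn_const.integrableOn_compact isCompact_Icc)
      (hcont.integrableOn_compact isCompact_Icc) hle,
    integral_Icc_eq_integral_Ioc, ← intervalIntegral.integral_of_le hab,
    intervalIntegral.integral_sub (hcont.intervalIntegrable_of_Icc hab) intervalIntegrable_const,
    integral_const_div_of_pos _ ha (ha.trans_le hab), intervalIntegral.integral_const,
    smul_eq_mul]
  ring

theorem mul_log_div_three_mul_lt {a b : ℝ} (ha : 0 < a) (hb : 0 < b) :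
    a * b * Real.log (b / (3 * a)) < a * b * Real.log (b / a) - a * (b - a) := by
  have hsplit : Real.log (b / a) = Real.log 3 + Real.log (b / (3 * a)) := by
    rw [← Real.log_mul (by norm_num) (by positivity)]
    congr 1
    field_simp
  rw [hsplit]
  nlinarith [Real.log_three_gt_d9, mul_pos ha hb]

/-- the set `A = {x₁ x₂ ≤ δ/4, δ ≤ x₁, x₂ ≤ 1/4}` stays in `B(1/2)`
under rotations `s ∈ [-π/4, π/4)`, and its area is
`∫_δ^{1/4} δ/(4t) dt - δ(1/4 - δ) > (δ/4) ln(1/(12δ))`. -/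
theorem measure_hyperbolic_region (δ : ℝ) (hδ : 0 < δ ∧ δ < 1 / 10) :
    (∀ s ∈ Set.Ico (-(π / 4)) (π / 4),
      rot s '' {x : ℝ × ℝ | x.1 * x.2 ≤ δ / 4 ∧ δ ≤ x.1 ∧ x.1 ≤ 1 / 4 ∧ δ ≤ x.2 ∧ x.2 ≤ 1 / 4}
        ⊆ euclBall (1 / 2)) ∧
    (volume {x : ℝ × ℝ | x.1 * x.2 ≤ δ / 4 ∧ δ ≤ x.1 ∧ x.1 ≤ 1 / 4 ∧ δ ≤ x.2 ∧ x.2 ≤ 1 / 4}).toReal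
      = (∫ t in δ..(1 / 4), δ / (4 * t)) - δ * (1 / 4 - δ) ∧
    (∫ t in δ..(1 / 4), δ / (4 * t)) - δ * (1 / 4 - δ) > δ / 4 * Real.log (1 / (12 * δ)) := by
  obtain ⟨hδ0, hδ1⟩ := hδ
  have hintegral : ∫ t in δ..(1 / 4), δ / (4 * t) = δ * (1 / 4) * Real.log (1 / 4 / δ) := by
    simp_rw [div_mul_eq_div_div, div_eq_mul_one_div δ 4]
    exact integral_const_div_of_pos _ hδ0 (by norm_num)
  refine ⟨fun s _ => rot_image_subset_euclBall s ?_, ?_, ?_⟩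
  · rintro x ⟨-, hx₁, hx₁', hx₂, hx₂'⟩
    exact mem_euclBall_of_abs_le (by norm_num) (abs_le.2 ⟨by linarith, by linarith⟩)
      (abs_le.2 ⟨by linarith, by linarith⟩)
  · rw [hintegral, div_eq_mul_one_div δ 4, toReal_volume_setOf_mul_le_mul hδ0 (by linarith)]
  · have hratio : 1 / (12 * δ) = 1 / 4 / (3 * δ) := by field_simp; norm_num
    rw [hintegral, hratio, div_eq_mul_one_div δ 4]
    exact mul_log_div_three_mul_lt hδ0 (by norm_num)

end
end
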